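/- arXiv:1912.06780 — 11 statements merged into one kernel-verified Lean document; each statement's English description precedes it below -/
import Mathlib

section
/- Let p : ℝ^m → ℝ be a probability density with respect to Lebesgue measure λ (i.e. p is nonnegative, measurable, and ∫ p dλ = 1), let β > 0, and let S = {x : p(x) ≥ β} be the superlevel set of p at level β. Then for every Lebesgue-measurable set A ⊆ ℝ^m with ∫_A p dλ ≥ ∫_S p dλ, one has λ(A) ≥ λ(S). In other words, superlevel sets of a density are minimum volume sets for their own probability content. -/
open MeasureTheory

/-- Superlevel sets of a probability density are minimum volume sets for their
own probability content. -/
theorem superlevel_set_is_minimum_volume_set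
    (m : ℕ) (p : (Fin m → ℝ) → ℝ)
    (hmeas : Measurable p) (hnonneg : ∀ x, 0 ≤ p x)
    (hint : ∫ x, p x = 1)
    (β : ℝ) (hβ : 0 < β)
    (A : Set (Fin m → ℝ)) (hA : MeasurableSet A)
    (hge : (∫ x in {x | β ≤ p x}, p x) ≤ ∫ x in A, p x) :
    volume {x | β ≤ p x} ≤ volume A := by
  set S : Set (Fin m → ℝ) := {x | β ≤ p x} with hS
  have hSmeas : MeasurableSet S := measurableSet_le measurable_const hmeas
  -- p is integrable
  have hInt : Integrable p := by
    by_contra h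
    rw [integral_undef h] at hint
    norm_num at hint
  have hae : ∀ (μ : Measure (Fin m → ℝ)), 0 ≤ᵐ[μ] p := fun μ =>
    Filter.Eventually.of_forall hnonneg
  -- lintegral notation
  set f : (Fin m → ℝ) → ENNReal := fun x => ENNReal.ofReal (p x) with hf
  have hfmeas : Measurable f := hmeas.ennreal_ofReal
  have htotal : ∫⁻ x, f x = 1 := by
    rw [← ofReal_integral_eq_lintegral_ofReal hInt (hae _), hint, ENNReal.ofReal_one]
  have hfin : ∀ s : Set (Fin m → ℝ), (∫⁻ x in s, f x) ≠ ⊤ := by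
    intro s
    have : (∫⁻ x in s, f x) ≤ ∫⁻ x, f x := setLIntegral_le_lintegral s f
    rw [htotal] at this
    exact ne_top_of_le_ne_top (by norm_num) this
  -- convert the Bochner hypothesis to lintegrals
  have hgeL : (∫⁻ x in S, f x) ≤ ∫⁻ x in A, f x := by
    have h1 : (∫⁻ x in S, f x) = ENNReal.ofReal (∫ x in S, p x) :=
      (ofReal_integral_eq_lintegral_ofReal hInt.integrableOn (hae _)).symm
    have h2 : (∫⁻ x in A, f x) = ENNReal.ofReal (∫ x in A, p x) :=
      (ofReal_integral_eq_lintegral_ofReal hInt.integrableOn (hae _)).symm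
    rw [h1, h2]
    exact ENNReal.ofReal_le_ofReal hge
  -- split lintegrals
  have hsplitS : (∫⁻ x in S ∩ A, f x) + (∫⁻ x in S \ A, f x) = ∫⁻ x in S, f x :=
    lintegral_inter_add_diff f S hA
  have hsplitA : (∫⁻ x in A ∩ S, f x) + (∫⁻ x in A \ S, f x) = ∫⁻ x in A, f x :=
    lintegral_inter_add_diff f A hSmeas
  have hcancel : (∫⁻ x in S \ A, f x) ≤ ∫⁻ x in A \ S, f x := by
    rw [← hsplitS, ← hsplitA, Set.inter_comm A S] at hgeL
    exact (ENNReal.add_le_add_iff_left (hfin (S ∩ A))).mp hgeL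
  -- lower bound on S \ A
  have hlow : ENNReal.ofReal β * volume (S \ A) ≤ ∫⁻ x in S \ A, f x := by
    calc ENNReal.ofReal β * volume (S \ A)
        = ∫⁻ _ in S \ A, ENNReal.ofReal β := (setLIntegral_const _ _).symm
      _ ≤ ∫⁻ x in S \ A, f x := by
          apply setLIntegral_mono hfmeas
          intro x hx
          exact ENNReal.ofReal_le_ofReal hx.1
  -- upper bound on A \ S
  have hup : (∫⁻ x in A \ S, f x) ≤ ENNReal.ofReal β * volume (A \ S) := by
    calc (∫⁻ x in A \ S, f x)
        ≤ ∫⁻ _ in A \ S, ENNReal.ofReal β := by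
          apply setLIntegral_mono measurable_const
          intro x hx
          exact ENNReal.ofReal_le_ofReal (le_of_lt (not_le.mp hx.2))
      _ = ENNReal.ofReal β * volume (A \ S) := setLIntegral_const _ _
  have hβ' : ENNReal.ofReal β ≠ 0 := by
    simp [ENNReal.ofReal_eq_zero, not_le, hβ]
  have hvol : volume (S \ A) ≤ volume (A \ S) := by
    have := (hlow.trans hcancel).trans hup
    exact (ENNReal.mul_le_mul_iff_right hβ' ENNReal.ofReal_ne_top).mp this
  calc volume S = volume (S ∩ A) + volume (S \ A) := (measure_inter_add_diff S hA).symm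
    _ ≤ volume (A ∩ S) + volume (A \ S) := by
        rw [Set.inter_comm]; exact add_le_add le_rfl hvol
    _ = volume A := measure_inter_add_diff A hSmeas
end

section
/- Let p_c and p_t be probability densities on ℝ^m, let A = {x : p_c(x) < p_t(x)}, and suppose there exists ε > 0 such that p_c(x) ≥ ε for all x ∈ A, P_c({x : p_c(x) < ε}) > 0, and P_t({x : p_t(x) < ε}) > 0. Then for every δ with 0 < δ ≤ ε: (1) P_t({x : p_c(x) ≥ δ}) ≥ P_c({x : p_c(x) ≥ δ}); (2) P_c({x : p_t(x) ≥ δ}) ≤ P_t({x : p_t(x) ≥ δ}); and moreover P_c({x : p_c(x) ≥ ε}) < 1 and P_t({x : p_t(x) ≥ ε}) < 1. -/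
open MeasureTheory

/-- Proposition: if `p_c ≥ ε` on the set `A = {x | p_c x < p_t x}` and both densities
assign positive probability to their own sub-`ε` regions, then the weak
conservativeness conditions hold for every level `0 < δ ≤ ε`. -/
theorem weakly_conservative_of_eps_bound
    (m : ℕ) (pc pt : (Fin m → ℝ) → ℝ)
    (hpc_meas : Measurable pc) (hpt_meas : Measurable pt)
    (hpc_nonneg : ∀ x, 0 ≤ pc x) (hpt_nonneg : ∀ x, 0 ≤ pt x)
    (hpc_int : ∫ x, pc x = 1) (hpt_int : ∫ x, pt x = 1)
    (ε : ℝ) (hε : 0 < ε)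
    (hA : ∀ x ∈ {x | pc x < pt x}, ε ≤ pc x)
    (hc_small : 0 < ∫ x in {x | pc x < ε}, pc x)
    (ht_small : 0 < ∫ x in {x | pt x < ε}, pt x) :
    (∀ δ : ℝ, 0 < δ → δ ≤ ε →
      (∫ x in {x | δ ≤ pc x}, pc x) ≤ (∫ x in {x | δ ≤ pc x}, pt x) ∧
      (∫ x in {x | δ ≤ pt x}, pc x) ≤ (∫ x in {x | δ ≤ pt x}, pt x)) ∧
    (∫ x in {x | ε ≤ pc x}, pc x) < 1 ∧
    (∫ x in {x | ε ≤ pt x}, pt x) < 1 := by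
  have hpcI : Integrable pc := by
    by_contra h
    rw [integral_undef h] at hpc_int
    norm_num at hpc_int
  have hptI : Integrable pt := by
    by_contra h
    rw [integral_undef h] at hpt_int
    norm_num at hpt_int
  -- complement identity
  have hcompl : ∀ (f : (Fin m → ℝ) → ℝ) (c : ℝ), {x | c ≤ f x}ᶜ = {x | f x < c} := by
    intro f c
    ext x
    simp [not_le]
  -- pointwise comparison: pt ≤ pc wherever pc < ε or pt < ε... we use:
  have hpt_le : ∀ x, pc x < ε ∨ pt x < ε → pt x ≤ pc x := by
    intro x hx
    by_contra h
    push_neg at h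
    have := hA x h
    rcases hx with h1 | h1 <;> linarith
  constructor
  · intro δ hδ hδε
    constructor
    · set s : Set (Fin m → ℝ) := {x | δ ≤ pc x} with hs_def
      have hs : MeasurableSet s := measurableSet_le measurable_const hpc_meas
      have e1 : (∫ x in s, pc x) + (∫ x in sᶜ, pc x) = 1 := by
        rw [integral_add_compl hs hpcI, hpc_int]
      have e2 : (∫ x in s, pt x) + (∫ x in sᶜ, pt x) = 1 := by
        rw [integral_add_compl hs hptI, hpt_int]
      have hmono : (∫ x in sᶜ, pt x) ≤ (∫ x in sᶜ, pc x) := by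
        apply setIntegral_mono_on hptI.integrableOn hpcI.integrableOn hs.compl
        intro x hx
        have hx' : pc x < δ := by simpa [hs_def, not_le] using hx
        exact hpt_le x (Or.inl (lt_of_lt_of_le hx' hδε))
      linarith
    · set s : Set (Fin m → ℝ) := {x | δ ≤ pt x} with hs_def
      have hs : MeasurableSet s := measurableSet_le measurable_const hpt_meas
      have e1 : (∫ x in s, pc x) + (∫ x in sᶜ, pc x) = 1 := by
        rw [integral_add_compl hs hpcI, hpc_int]
      have e2 : (∫ x in s, pt x) + (∫ x in sᶜ, pt x) = 1 := by
        rw [integral_add_compl hs hptI, hpt_int]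
      have hmono : (∫ x in sᶜ, pt x) ≤ (∫ x in sᶜ, pc x) := by
        apply setIntegral_mono_on hptI.integrableOn hpcI.integrableOn hs.compl
        intro x hx
        have hx' : pt x < δ := by simpa [hs_def, not_le] using hx
        exact hpt_le x (Or.inr (lt_of_lt_of_le hx' hδε))
      linarith
  constructor
  · have hs : MeasurableSet {x | ε ≤ pc x} := measurableSet_le measurable_const hpc_meas
    have e1 : (∫ x in {x | ε ≤ pc x}, pc x) + (∫ x in {x | ε ≤ pc x}ᶜ, pc x) = 1 := by
      rw [integral_add_compl hs hpcI, hpc_int]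
    rw [hcompl pc ε] at e1
    linarith
  · have hs : MeasurableSet {x | ε ≤ pt x} := measurableSet_le measurable_const hpt_meas
    have e1 : (∫ x in {x | ε ≤ pt x}, pt x) + (∫ x in {x | ε ≤ pt x}ᶜ, pt x) = 1 := by
      rw [integral_add_compl hs hptI, hpt_int]
    rw [hcompl pt ε] at e1
    linarith
end

section
/- Fix n ≥ 2. Let f_C, f_1, …, f_n : ℝ^m → ℝ be continuous, strictly positive functions with f_i(x) → 0 as ‖x‖ → ∞ for each i = 1, …, n, such that η_i := ∫ f_C(x) f_i(x) dx ∈ (0, ∞) for each i and η_t := ∫ f_C(x) ∏_{i=1}^n f_i(x) dx ∈ (0, ∞). Define the input densities q_i(x) = f_C(x) f_i(x)/η_i, the true fused density p_t(x) = f_C(x) ∏_{i=1}^n f_i(x) / η_t, and, for nonnegative weights ω_1, …, ω_n with ∑ ω_i = 1, the linear opinion pool p_f(x) = ∑_{i=1}^n ω_i q_i(x). Then p_f(x)/p_t(x) → ∞ as ‖x‖ → ∞; in particular, the set {x : p_f(x) < p_t(x)} is bounded. -/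
/-!
Since the weights sum to one, some `ω k` is positive, and then `p_f ≥ ω_k q_k`. The common factor
`f_C` cancels in `ω_k q_k / p_t = (ω_k η_t / η_k) / ∏_{j ≠ k} f_j`, and with `n ≥ 2` the product on the
right is nonempty, so it tends to `0` at infinity; hence `p_f / p_t → ∞`. A set on which a function
tending to `∞` along the cobounded filter stays below `1` is bounded.
-/

open MeasureTheory Filter Finset Topology

lemma Filter.Tendsto.isBounded_setOf_lt {α β : Type*} [Bornology α] [Preorder β] {u : α → β}
    (hu : Tendsto u (Bornology.cobounded α) atTop) (a : β) : Bornology.IsBounded {x | u x < a} :=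
  Bornology.isBounded_def.2 <| (hu.eventually_ge_atTop a).mono fun _ h => h.not_gt

lemma tendsto_finset_prod_zero {ι α M : Type*} [CommMonoidWithZero M] [TopologicalSpace M]
    [ContinuousMul M] {l : Filter α} {f : ι → α → M} {s : Finset ι} (hs : s.Nonempty)
    (hf : ∀ i ∈ s, Tendsto (f i) l (𝓝 0)) : Tendsto (fun x => ∏ i ∈ s, f i x) l (𝓝 0) := by
  have hzero : ∏ _i ∈ s, (0 : M) = 0 := prod_eq_zero hs.choose_spec rfl
  simpa only [hzero] using tendsto_finsetProd s hf

lemma tendsto_atTop_of_div_le {α : Type*} {l : Filter α} {g h : α → ℝ} {c : ℝ} (hc : 0 < c)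
    (hg_pos : ∀ᶠ x in l, 0 < g x) (hg : Tendsto g l (𝓝 0)) (hle : ∀ᶠ x in l, c / g x ≤ h x) :
    Tendsto h l atTop := by
  have hg_inv : Tendsto (fun x => (g x)⁻¹) l atTop :=
    (tendsto_nhdsWithin_of_tendsto_nhds_of_eventually_within _ hg hg_pos).inv_tendsto_nhdsGT_zero
  refine tendsto_atTop_mono' l hle ?_
  simpa only [div_eq_mul_inv] using hg_inv.const_mul_atTop hc

lemma exists_pos_of_sum_eq_one {ι : Type*} [Fintype ι] {ω : ι → ℝ} (hω : ∑ i, ω i = 1) :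
    ∃ k, 0 < ω k := by
  have hsum : ∑ _i : ι, (0 : ℝ) < ∑ i, ω i := by simp [hω]
  simpa using exists_lt_of_sum_lt hsum

section Pool

variable {ι : Type*} [Fintype ι] [DecidableEq ι] {fC ηt : ℝ} {f η ω : ι → ℝ}

lemma weight_mul_div_le_pool_div_fused (hfC : 0 < fC) (hf : ∀ i, 0 < f i) (hη : ∀ i, 0 < η i)
    (hηt : 0 < ηt) (hω : ∀ i, 0 ≤ ω i) (k : ι) :
    ω k * ηt / η k / ∏ j ∈ univ.erase k, f j ≤
      (∑ i, ω i * (fC * f i / η i)) / (fC * (∏ i, f i) / ηt) := by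
  have hfused_pos : 0 < fC * (∏ i, f i) / ηt := by
    have := prod_pos fun i (_ : i ∈ univ) => hf i
    positivity
  have hterm_le : ω k * (fC * f k / η k) ≤ ∑ i, ω i * (fC * f i / η i) :=
    single_le_sum (f := fun i => ω i * (fC * f i / η i))
      (fun i _ => mul_nonneg (hω i) (div_nonneg (mul_pos hfC (hf i)).le (hη i).le)) (mem_univ k)
  have hterm_eq : ω k * (fC * f k / η k) / (fC * (∏ i, f i) / ηt) =
      ω k * ηt / η k / ∏ j ∈ univ.erase k, f j := by
    have hrest := (prod_pos fun j (_ : j ∈ univ.erase k) => hf j).ne'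
    rw [← mul_prod_erase univ f (mem_univ k)]
    field_simp [hfC.ne', (hf k).ne', (hη k).ne', hηt.ne']
  exact hterm_eq ▸ div_le_div_of_nonneg_right hterm_le hfused_pos.le

end Pool

theorem linear_opinion_pool_weakly_conservative_general
    (m n : ℕ) (hn : 2 ≤ n)
    (fC : (Fin m → ℝ) → ℝ) (f : Fin n → (Fin m → ℝ) → ℝ)
    (hfC_pos : ∀ x, 0 < fC x)
    (hf_pos : ∀ i x, 0 < f i x)
    (hf_zero : ∀ i, Tendsto (f i) (comap (fun x => ‖x‖) atTop) (nhds 0))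
    (η : Fin n → ℝ)
    (hη_pos : ∀ i, 0 < η i)
    (ηt : ℝ)
    (hηt_pos : 0 < ηt)
    (ω : Fin n → ℝ) (hω_nonneg : ∀ i, 0 ≤ ω i) (hω_sum : ∑ i, ω i = 1)
    (q : Fin n → (Fin m → ℝ) → ℝ) (hq : ∀ i x, q i x = fC x * f i x / η i)
    (pt pf : (Fin m → ℝ) → ℝ)
    (hpt : ∀ x, pt x = fC x * (∏ i, f i x) / ηt)
    (hpf : ∀ x, pf x = ∑ i, ω i * q i x) :
    Tendsto (fun x => pf x / pt x) (comap (fun x => ‖x‖) atTop) atTop ∧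
    Bornology.IsBounded {x | pf x < pt x} := by
  have := Fin.nontrivial_iff_two_le.mpr hn
  obtain ⟨k, hk⟩ := exists_pos_of_sum_eq_one hω_sum
  obtain ⟨j, hjk⟩ := exists_ne k
  have hrest_zero : Tendsto (fun x => ∏ j ∈ univ.erase k, f j x) (comap (‖·‖) atTop) (𝓝 0) :=
    tendsto_finset_prod_zero ⟨j, mem_erase.2 ⟨hjk, mem_univ j⟩⟩ fun j _ => hf_zero j
  have hratio : Tendsto (fun x => pf x / pt x) (comap (‖·‖) atTop) atTop :=
    tendsto_atTop_of_div_le (c := ω k * ηt / η k) (by have := hη_pos k; positivity)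
      (.of_forall fun x => prod_pos fun j _ => hf_pos j x) hrest_zero
      (.of_forall fun x => by
        simpa only [hpf, hq, hpt] using weight_mul_div_le_pool_div_fused (hfC_pos x)
          (hf_pos · x) hη_pos hηt_pos hω_nonneg k)
  have hpt_pos : ∀ x, 0 < pt x := fun x => by
    have := prod_pos fun i (_ : i ∈ univ) => hf_pos i x
    have := hfC_pos x
    rw [hpt]
    positivity
  have hset : {x | pf x < pt x} = {x | pf x / pt x < 1} := by
    ext x
    simp only [Set.mem_ofPred_eq, div_lt_one (hpt_pos x)]
  refine ⟨hratio, hset ▸ ?_⟩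
  rw [comap_norm_atTop] at hratio
  exact hratio.isBounded_setOf_lt 1

/-- The linear opinion pool `p_f = ∑ ω_i q_i` satisfies `p_f / p_t → ∞` at infinity,
where `p_t` is the ideally fused density; in particular `{x | p_f x < p_t x}` is bounded. -/
theorem linear_opinion_pool_weakly_conservative
    (m n : ℕ) (hn : 2 ≤ n)
    (fC : (Fin m → ℝ) → ℝ) (f : Fin n → (Fin m → ℝ) → ℝ)
    (hfC_cont : Continuous fC) (hfC_pos : ∀ x, 0 < fC x)
    (hf_cont : ∀ i, Continuous (f i)) (hf_pos : ∀ i x, 0 < f i x)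
    (hf_zero : ∀ i, Tendsto (f i) (comap (fun x => ‖x‖) atTop) (nhds 0))
    (η : Fin n → ℝ)
    (hη : ∀ i, η i = ∫ x, fC x * f i x)
    (hη_int : ∀ i, Integrable (fun x => fC x * f i x))
    (hη_pos : ∀ i, 0 < η i)
    (ηt : ℝ)
    (hηt : ηt = ∫ x, fC x * ∏ i, f i x)
    (hηt_int : Integrable (fun x => fC x * ∏ i, f i x))
    (hηt_pos : 0 < ηt)
    (ω : Fin n → ℝ) (hω_nonneg : ∀ i, 0 ≤ ω i) (hω_sum : ∑ i, ω i = 1)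
    (q : Fin n → (Fin m → ℝ) → ℝ) (hq : ∀ i x, q i x = fC x * f i x / η i)
    (pt pf : (Fin m → ℝ) → ℝ)
    (hpt : ∀ x, pt x = fC x * (∏ i, f i x) / ηt)
    (hpf : ∀ x, pf x = ∑ i, ω i * q i x) :
    Tendsto (fun x => pf x / pt x) (comap (fun x => ‖x‖) atTop) atTop ∧
    Bornology.IsBounded {x | pf x < pt x} :=
  linear_opinion_pool_weakly_conservative_general m n hn fC f hfC_pos hf_pos hf_zero η hη_pos ηt
    hηt_pos ω hω_nonneg hω_sum q hq pt pf hpt hpf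
end

section
/- Fix n ≥ 2. Let f_C, f_1, …, f_n : ℝ^m → ℝ be continuous, strictly positive functions with f_i(x) → 0 as ‖x‖ → ∞ for each i = 1, …, n, such that η_i := ∫ f_C(x) f_i(x) dx ∈ (0, ∞) for each i and η_t := ∫ f_C(x) ∏_{i=1}^n f_i(x) dx ∈ (0, ∞). Define the input densities q_i(x) = f_C(x) f_i(x)/η_i and the true fused density p_t(x) = f_C(x) ∏_{i=1}^n f_i(x) / η_t. Let ω_1, …, ω_n ∈ [0,1] with ∑ ω_i = 1, assume η_f := ∫ ∏_{i=1}^n q_i(x)^{ω_i} dx ∈ (0, ∞), and define the log-linear opinion pool p_f(x) = (1/η_f) ∏_{i=1}^n q_i(x)^{ω_i}. Then p_f(x)/p_t(x) → ∞ as ‖x‖ → ∞; in particular, the set {x : p_f(x) < p_t(x)} is bounded. -/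
open MeasureTheory Filter

/-- The log-linear opinion pool (Chernoff fusion) `p_f ∝ ∏ q_i ^ ω_i` satisfies
`p_f / p_t → ∞` at infinity, where `p_t` is the ideally fused density; in particular
`{x | p_f x < p_t x}` is bounded. -/
theorem log_linear_opinion_pool_weakly_conservative
    (m n : ℕ) (hn : 2 ≤ n)
    (fC : (Fin m → ℝ) → ℝ) (f : Fin n → (Fin m → ℝ) → ℝ)
    (hfC_cont : Continuous fC) (hfC_pos : ∀ x, 0 < fC x)
    (hf_cont : ∀ i, Continuous (f i)) (hf_pos : ∀ i x, 0 < f i x)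
    (hf_zero : ∀ i, Tendsto (f i) (comap (fun x => ‖x‖) atTop) (nhds 0))
    (η : Fin n → ℝ)
    (hη : ∀ i, η i = ∫ x, fC x * f i x)
    (hη_int : ∀ i, Integrable (fun x => fC x * f i x))
    (hη_pos : ∀ i, 0 < η i)
    (ηt : ℝ)
    (hηt : ηt = ∫ x, fC x * ∏ i, f i x)
    (hηt_int : Integrable (fun x => fC x * ∏ i, f i x))
    (hηt_pos : 0 < ηt)
    (ω : Fin n → ℝ) (hω_mem : ∀ i, ω i ∈ Set.Icc (0:ℝ) 1) (hω_sum : ∑ i, ω i = 1)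
    (q : Fin n → (Fin m → ℝ) → ℝ) (hq : ∀ i x, q i x = fC x * f i x / η i)
    (ηf : ℝ)
    (hηf : ηf = ∫ x, ∏ i, q i x ^ ω i)
    (hηf_int : Integrable (fun x => ∏ i, q i x ^ ω i))
    (hηf_pos : 0 < ηf)
    (pt pf : (Fin m → ℝ) → ℝ)
    (hpt : ∀ x, pt x = fC x * (∏ i, f i x) / ηt)
    (hpf : ∀ x, pf x = (1 / ηf) * ∏ i, q i x ^ ω i) :
    Tendsto (fun x => pf x / pt x) (comap (fun x => ‖x‖) atTop) atTop ∧
    Bornology.IsBounded {x | pf x < pt x} := by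
  set l := comap (fun x : Fin m → ℝ => ‖x‖) atTop with hl
  set E : ℝ := ∏ i, η i ^ ω i with hE
  have hE_pos : 0 < E :=
    Finset.prod_pos fun i _ => Real.rpow_pos_of_pos (hη_pos i) _
  set C : ℝ := ηt / (ηf * E) with hC
  have hC_pos : 0 < C := div_pos hηt_pos (mul_pos hηf_pos hE_pos)
  -- the pointwise ratio identity
  have hratio : ∀ x, pf x / pt x = C * ∏ i, f i x ^ (ω i - 1) := by
    intro x
    have hprod :
        (∏ i, q i x ^ ω i) =
          fC x * ((∏ i, f i x ^ (ω i - 1)) * ∏ i, f i x) / E := by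
      have h1 : ∀ i : Fin n, q i x ^ ω i
          = fC x ^ ω i * (f i x ^ (ω i - 1) * f i x) / η i ^ ω i := by
        intro i
        have key : f i x ^ (ω i - 1) * f i x = f i x ^ ω i := by
          nth_rewrite 2 [← Real.rpow_one (f i x)]
          rw [← Real.rpow_add (hf_pos i x)]
          congr 1
          ring
        rw [hq, Real.div_rpow (mul_pos (hfC_pos x) (hf_pos i x)).le (hη_pos i).le,
          Real.mul_rpow (hfC_pos x).le (hf_pos i x).le, key]
      rw [Finset.prod_congr rfl fun i _ => h1 i]
      rw [Finset.prod_div_distrib, Finset.prod_mul_distrib,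
        Finset.prod_mul_distrib]
      rw [← Real.rpow_sum_of_pos (hfC_pos x) ω Finset.univ, hω_sum,
        Real.rpow_one]
    rw [hpf, hpt, hprod, hC]
    have hB : (0:ℝ) < ∏ i, f i x := Finset.prod_pos fun i _ => hf_pos i x
    set A := ∏ i, f i x ^ (ω i - 1) with hA
    set B := ∏ i, f i x with hB'
    have h1 : fC x ≠ 0 := (hfC_pos x).ne'
    have h2 : B ≠ 0 := hB.ne'
    have h3 : ηf ≠ 0 := hηf_pos.ne'
    have h4 : E ≠ 0 := hE_pos.ne'
    have h5 : ηt ≠ 0 := hηt_pos.ne'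
    field_simp
  -- there is an index with ω j < 1
  obtain ⟨j, hj⟩ : ∃ j, ω j < 1 := by
    by_contra h
    push_neg at h
    have : (n : ℝ) ≤ ∑ i, ω i := by
      calc (n : ℝ) = ∑ _i : Fin n, (1:ℝ) := by simp
        _ ≤ ∑ i, ω i := Finset.sum_le_sum fun i _ => h i
    rw [hω_sum] at this
    have : (2:ℝ) ≤ 1 := le_trans (by exact_mod_cast hn) this
    linarith
  -- f j ^ (ω j - 1) → ∞
  have hjt : Tendsto (fun x => f j x ^ (ω j - 1)) l atTop := by
    have h0 : Tendsto (f j) l (nhdsWithin 0 (Set.Ioi 0)) :=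
      tendsto_nhdsWithin_of_tendsto_nhds_of_eventually_within _ (hf_zero j)
        (Eventually.of_forall fun x => hf_pos j x)
    have hinv : Tendsto (fun x => (f j x)⁻¹) l atTop :=
      tendsto_inv_nhdsGT_zero.comp h0
    have := (tendsto_rpow_atTop (by linarith : (0:ℝ) < 1 - ω j)).comp hinv
    refine this.congr fun x => ?_
    simp only [Function.comp]
    rw [Real.inv_rpow (hf_pos j x).le, ← Real.rpow_neg (hf_pos j x).le, neg_sub]
  -- eventually all f i ≤ 1
  have hev : ∀ᶠ x in l, ∀ i, f i x ≤ 1 := by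
    rw [eventually_all]
    intro i
    have := (hf_zero i).eventually (eventually_lt_nhds (by norm_num : (0:ℝ) < 1))
    exact this.mono fun x hx => hx.le
  -- product tendsto atTop
  have hprod_t : Tendsto (fun x => ∏ i, f i x ^ (ω i - 1)) l atTop := by
    apply tendsto_atTop_mono' l _ hjt
    filter_upwards [hev] with x hx
    rw [← Finset.mul_prod_erase Finset.univ _ (Finset.mem_univ j)]
    refine le_mul_of_one_le_right (Real.rpow_pos_of_pos (hf_pos j x) _).le ?_
    calc (1:ℝ) = ∏ _i ∈ Finset.univ.erase j, (1:ℝ) := by simp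
      _ ≤ ∏ i ∈ Finset.univ.erase j, f i x ^ (ω i - 1) :=
        Finset.prod_le_prod (fun i _ => zero_le_one) fun i _ =>
          Real.one_le_rpow_of_pos_of_le_one_of_nonpos (hf_pos i x) (hx i)
            (by linarith [(hω_mem i).2])
  have hT : Tendsto (fun x => pf x / pt x) l atTop := by
    have := hprod_t.const_mul_atTop hC_pos
    exact this.congr fun x => (hratio x).symm
  refine ⟨hT, ?_⟩
  have h1 : ∀ᶠ x in l, 1 ≤ pf x / pt x := hT.eventually_ge_atTop 1
  rw [hl, eventually_comap] at h1
  obtain ⟨R, hR⟩ := eventually_atTop.mp h1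
  have hsub : {x | pf x < pt x} ⊆ Metric.ball (0 : Fin m → ℝ) R := by
    intro x hx
    rw [mem_ball_zero_iff]
    by_contra hnot
    push_neg at hnot
    have := hR ‖x‖ hnot x rfl
    have hptpos : 0 < pt x := by
      rw [hpt]
      exact div_pos (mul_pos (hfC_pos x) (Finset.prod_pos fun i _ => hf_pos i x)) hηt_pos
    have : pt x ≤ pf x := (one_le_div hptpos).mp this
    exact absurd hx (not_lt.2 this)
  exact Metric.isBounded_ball.subset hsub
end

section
/- Fix n ≥ 2 and a real number q ≠ 0. Let f_C, f_1, …, f_n : ℝ^m → ℝ be continuous, strictly positive functions with f_i(x) → 0 as ‖x‖ → ∞ for each i = 1, …, n, such that η_i := ∫ f_C(x) f_i(x) dx ∈ (0, ∞) for each i and η_t := ∫ f_C(x) ∏_{i=1}^n f_i(x) dx ∈ (0, ∞). Define the input densities q_i(x) = f_C(x) f_i(x)/η_i and the true fused density p_t(x) = f_C(x) ∏_{i=1}^n f_i(x)/η_t. Let ω_1, …, ω_n ≥ 0 with ∑ ω_i = 1, assume η_f := ∫ (∑_{i=1}^n ω_i q_i(x)^q)^{1/q} dx ∈ (0, ∞),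 and define the generalized power mean fusion p_f(x) = (1/η_f)(∑_{i=1}^n ω_i q_i(x)^q)^{1/q}. Then p_f(x)/p_t(x) → ∞ as ‖x‖ → ∞; in particular, the set {x : p_f(x) < p_t(x)} is bounded. -/
open MeasureTheory Filter

/-- The generalized power mean fusion rule `p_f ∝ (∑ ω_i q_i ^ qe) ^ (1/qe)` (for
exponent `qe ≠ 0`) satisfies `p_f / p_t → ∞` at infinity, where `p_t` is the ideally
fused density; in particular `{x | p_f x < p_t x}` is bounded. -/
theorem power_mean_fusion_weakly_conservative
    (m n : ℕ) (hn : 2 ≤ n) (qe : ℝ) (hqe : qe ≠ 0)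
    (fC : (Fin m → ℝ) → ℝ) (f : Fin n → (Fin m → ℝ) → ℝ)
    (hfC_cont : Continuous fC) (hfC_pos : ∀ x, 0 < fC x)
    (hf_cont : ∀ i, Continuous (f i)) (hf_pos : ∀ i x, 0 < f i x)
    (hf_zero : ∀ i, Tendsto (f i) (comap (fun x => ‖x‖) atTop) (nhds 0))
    (η : Fin n → ℝ)
    (hη : ∀ i, η i = ∫ x, fC x * f i x)
    (hη_int : ∀ i, Integrable (fun x => fC x * f i x))
    (hη_pos : ∀ i, 0 < η i)
    (ηt : ℝ)
    (hηt : ηt = ∫ x, fC x * ∏ i, f i x)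
    (hηt_int : Integrable (fun x => fC x * ∏ i, f i x))
    (hηt_pos : 0 < ηt)
    (ω : Fin n → ℝ) (hω_nonneg : ∀ i, 0 ≤ ω i) (hω_sum : ∑ i, ω i = 1)
    (q : Fin n → (Fin m → ℝ) → ℝ) (hq : ∀ i x, q i x = fC x * f i x / η i)
    (ηf : ℝ)
    (hηf : ηf = ∫ x, (∑ i, ω i * q i x ^ qe) ^ (1 / qe))
    (hηf_int : Integrable (fun x => (∑ i, ω i * q i x ^ qe) ^ (1 / qe)))
    (hηf_pos : 0 < ηf)
    (pt pf : (Fin m → ℝ) → ℝ)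
    (hpt : ∀ x, pt x = fC x * (∏ i, f i x) / ηt)
    (hpf : ∀ x, pf x = (1 / ηf) * (∑ i, ω i * q i x ^ qe) ^ (1 / qe)) :
    Tendsto (fun x => pf x / pt x) (comap (fun x => ‖x‖) atTop) atTop ∧
    Bornology.IsBounded {x | pf x < pt x} := by
  classical
  have hnn : Nonempty (Fin n) := ⟨⟨0, by omega⟩⟩
  have hn0 : (Finset.univ : Finset (Fin n)).Nonempty := Finset.univ_nonempty
  set l := comap (fun x : Fin m → ℝ => ‖x‖) atTop with hl
  have hq_pos : ∀ i x, 0 < q i x := fun i x => by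
    rw [hq]
    exact div_pos (mul_pos (hfC_pos x) (hf_pos i x)) (hη_pos i)
  -- boundedness of each f i
  have hbdd : ∀ i, ∃ B, 0 < B ∧ ∀ x, f i x ≤ B := by
    intro i
    have h1 : ∀ᶠ x in l, f i x < 1 := (hf_zero i).eventually_lt_const one_pos
    rw [hl, eventually_comap, eventually_atTop] at h1
    obtain ⟨a, ha⟩ := h1
    obtain ⟨C, hC⟩ := (isCompact_closedBall (0 : Fin m → ℝ) |a|).exists_bound_of_continuousOn
      (hf_cont i).continuousOn
    refine ⟨max C 1, lt_of_lt_of_le one_pos (le_max_right _ _), fun x => ?_⟩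
    by_cases hx : a ≤ ‖x‖
    · exact le_trans (ha ‖x‖ hx x rfl).le (le_max_right _ _)
    · push_neg at hx
      have hxmem : x ∈ Metric.closedBall (0 : Fin m → ℝ) |a| := by
        simp only [Metric.mem_closedBall, dist_zero_right]
        exact le_trans hx.le (le_abs_self a)
      calc f i x ≤ |f i x| := le_abs_self _
        _ ≤ C := by simpa [Real.norm_eq_abs] using hC x hxmem
        _ ≤ max C 1 := le_max_left _ _
  choose B hB_pos hB using hbdd
  -- the majorant M
  set M : (Fin m → ℝ) → ℝ := fun x => ∑ j, ∏ i ∈ Finset.univ.erase j, f i x with hMdef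
  have hM_pos : ∀ x, 0 < M x := fun x =>
    Finset.sum_pos (fun j _ => Finset.prod_pos fun i _ => hf_pos i x) hn0
  have hM_le : ∀ x (j : Fin n), ∏ i ∈ Finset.univ.erase j, f i x ≤ M x := fun x j =>
    Finset.single_le_sum (fun i _ => (Finset.prod_pos fun k _ => hf_pos k x).le)
      (Finset.mem_univ j)
  have hprod0 : ∀ j : Fin n,
      Tendsto (fun x => ∏ i ∈ Finset.univ.erase j, f i x) l (nhds 0) := by
    intro j
    have hne : (Finset.univ.erase j).Nonempty := by
      rw [← Finset.card_pos, Finset.card_erase_of_mem (Finset.mem_univ j), Finset.card_univ,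
        Fintype.card_fin]
      omega
    obtain ⟨k, hk⟩ := hne
    set Bp := ∏ i ∈ (Finset.univ.erase j).erase k, B i with hBp
    have hub : ∀ x, ∏ i ∈ Finset.univ.erase j, f i x ≤ f k x * Bp := by
      intro x
      rw [← Finset.mul_prod_erase _ _ hk]
      exact mul_le_mul_of_nonneg_left
        (Finset.prod_le_prod (fun i _ => (hf_pos i x).le) (fun i _ => hB i x)) (hf_pos k x).le
    have hlim : Tendsto (fun x => f k x * Bp) l (nhds 0) := by
      have := (hf_zero k).mul_const Bp
      simpa using this
    exact squeeze_zero (fun x => (Finset.prod_pos fun i _ => hf_pos i x).le) hub hlim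
  have hM_zero : Tendsto M l (nhds 0) := by
    have := tendsto_finset_sum (Finset.univ : Finset (Fin n)) (fun j _ => hprod0 j)
    simpa using this
  -- η bound
  set ηmax := ∑ i, η i with hηmax
  have hηmax_pos : 0 < ηmax := Finset.sum_pos (fun i _ => hη_pos i) hn0
  have hη_le : ∀ i, η i ≤ ηmax := fun i =>
    Finset.single_le_sum (fun i _ => (hη_pos i).le) (Finset.mem_univ i)
  -- a positive weight
  obtain ⟨j, hj⟩ : ∃ j, 0 < ω j := by
    by_contra h
    push_neg at h
    have : ∑ i, ω i = 0 := Finset.sum_eq_zero fun i _ => le_antisymm (h i) (hω_nonneg i)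
    rw [hω_sum] at this
    norm_num at this
  have hω_le1 : ∀ i, ω i ≤ 1 :=
    fun i => hω_sum ▸ Finset.single_le_sum (fun i _ => hω_nonneg i) (Finset.mem_univ i)
  set c : ℝ := if 0 < qe then ω j ^ (1/qe) else (n : ℝ) ^ (1/qe) with hc
  have hnpos : (0:ℝ) < (n : ℝ) := by
    have : 0 < n := by omega
    exact_mod_cast this
  have hc_pos : 0 < c := by
    rw [hc]
    split
    · exact Real.rpow_pos_of_pos hj _
    · exact Real.rpow_pos_of_pos hnpos _
  set G : (Fin m → ℝ) → ℝ := fun x => fC x * ∏ i, f i x with hGdef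
  have hG_pos : ∀ x, 0 < G x := fun x =>
    mul_pos (hfC_pos x) (Finset.prod_pos fun i _ => hf_pos i x)
  set L : (Fin m → ℝ) → ℝ := fun x => G x / (ηmax * M x) with hLdef
  have hL_pos : ∀ x, 0 < L x := fun x =>
    div_pos (hG_pos x) (mul_pos hηmax_pos (hM_pos x))
  have hLq : ∀ i x, L x ≤ q i x := by
    intro i x
    have h1 : (∏ k, f k x) ≤ f i x * M x :=
      calc (∏ k, f k x) = f i x * ∏ k ∈ Finset.univ.erase i, f k x :=
            (Finset.mul_prod_erase _ _ (Finset.mem_univ i)).symm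
        _ ≤ f i x * M x := mul_le_mul_of_nonneg_left (hM_le x i) (hf_pos i x).le
    rw [hq]
    simp only [hLdef, hGdef]
    rw [div_le_div_iff₀ (mul_pos hηmax_pos (hM_pos x)) (hη_pos i)]
    calc fC x * (∏ k, f k x) * η i ≤ fC x * (f i x * M x) * ηmax := by
          apply mul_le_mul (mul_le_mul_of_nonneg_left h1 (hfC_pos x).le) (hη_le i)
            (hη_pos i).le
          exact mul_nonneg (hfC_pos x).le (mul_nonneg (hf_pos i x).le (hM_pos x).le)
      _ = fC x * f i x * (ηmax * M x) := by ring
  have hS_pos : ∀ x, 0 < ∑ i, ω i * q i x ^ qe := by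
    intro x
    have h0 : 0 < ω j * q j x ^ qe := mul_pos hj (Real.rpow_pos_of_pos (hq_pos j x) _)
    exact lt_of_lt_of_le h0 (Finset.single_le_sum
      (fun i _ => mul_nonneg (hω_nonneg i) (Real.rpow_pos_of_pos (hq_pos i x) _).le)
      (Finset.mem_univ j))
  have hmain : ∀ x, c * L x ≤ (∑ i, ω i * q i x ^ qe) ^ (1/qe) := by
    intro x
    have hLnn : (0:ℝ) ≤ L x := (hL_pos x).le
    rcases hqe.lt_or_gt with hqe' | hqe'
    · -- qe < 0
      have hq2 : ¬ (0 < qe) := not_lt.mpr hqe'.le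
      have h1 : ∑ i, ω i * q i x ^ qe ≤ (n : ℝ) * L x ^ qe := by
        calc ∑ i, ω i * q i x ^ qe ≤ ∑ _i : Fin n, L x ^ qe := by
              apply Finset.sum_le_sum
              intro i _
              calc ω i * q i x ^ qe ≤ 1 * (L x ^ qe) :=
                    mul_le_mul (hω_le1 i)
                      (Real.rpow_le_rpow_of_nonpos (hL_pos x) (hLq i x) hqe'.le)
                      (Real.rpow_pos_of_pos (hq_pos i x) _).le one_pos.le
                _ = L x ^ qe := one_mul _
          _ = (n : ℝ) * L x ^ qe := by
              rw [Finset.sum_const, Finset.card_univ, Fintype.card_fin, nsmul_eq_mul]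
      have h2 : ((n : ℝ) * L x ^ qe) ^ (1/qe) ≤ (∑ i, ω i * q i x ^ qe) ^ (1/qe) :=
        Real.rpow_le_rpow_of_nonpos (hS_pos x) h1
          (by
            apply div_nonpos_of_nonneg_of_nonpos zero_le_one hqe'.le)
      refine le_trans (le_of_eq ?_) h2
      rw [Real.mul_rpow hnpos.le (Real.rpow_pos_of_pos (hL_pos x) _).le,
        ← Real.rpow_mul hLnn, mul_one_div_cancel hqe, Real.rpow_one, hc, if_neg hq2]
    · -- 0 < qe
      have h1 : ω j * L x ^ qe ≤ ∑ i, ω i * q i x ^ qe := by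
        calc ω j * L x ^ qe ≤ ω j * q j x ^ qe :=
              mul_le_mul_of_nonneg_left (Real.rpow_le_rpow hLnn (hLq j x) hqe'.le) hj.le
          _ ≤ ∑ i, ω i * q i x ^ qe := Finset.single_le_sum
              (fun i _ => mul_nonneg (hω_nonneg i) (Real.rpow_pos_of_pos (hq_pos i x) _).le)
              (Finset.mem_univ j)
      have h2 : (ω j * L x ^ qe) ^ (1/qe) ≤ (∑ i, ω i * q i x ^ qe) ^ (1/qe) :=
        Real.rpow_le_rpow (by positivity) h1 (by positivity)
      refine le_trans (le_of_eq ?_) h2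
      rw [Real.mul_rpow hj.le (Real.rpow_pos_of_pos (hL_pos x) _).le,
        ← Real.rpow_mul hLnn, mul_one_div_cancel hqe, Real.rpow_one, hc, if_pos hqe']
  -- the constant K and the key pointwise bound
  set K := ηt * c / (ηf * ηmax) with hK
  have hK_pos : 0 < K := div_pos (mul_pos hηt_pos hc_pos) (mul_pos hηf_pos hηmax_pos)
  have hkey : ∀ x, K / M x ≤ pf x / pt x := by
    intro x
    have hGne : G x ≠ 0 := (hG_pos x).ne'
    have hMne : M x ≠ 0 := (hM_pos x).ne'
    have h3 : pf x / pt x = (ηt / (ηf * G x)) * (∑ i, ω i * q i x ^ qe) ^ (1/qe) := by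
      rw [hpf, hpt]
      have : fC x * (∏ i, f i x) = G x := rfl
      rw [this]
      field_simp
    have h2 : (ηt / (ηf * G x)) * (c * L x) ≤
        (ηt / (ηf * G x)) * (∑ i, ω i * q i x ^ qe) ^ (1/qe) :=
      mul_le_mul_of_nonneg_left (hmain x) (div_pos hηt_pos (mul_pos hηf_pos (hG_pos x))).le
    have h1 : K / M x = (ηt / (ηf * G x)) * (c * L x) := by
      rw [hK, hLdef]
      field_simp
    rw [h1, h3]
    exact h2
  have htends : Tendsto (fun x => K / M x) l atTop := by
    have hMinv : Tendsto (fun x => (M x)⁻¹) l atTop := by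
      apply Filter.Tendsto.inv_tendsto_nhdsGT_zero
      exact tendsto_nhdsWithin_of_tendsto_nhds_of_eventually_within _ hM_zero
        (Eventually.of_forall fun x => hM_pos x)
    have := hMinv.const_mul_atTop hK_pos
    simpa [div_eq_mul_inv] using this
  have hT : Tendsto (fun x => pf x / pt x) l atTop := tendsto_atTop_mono hkey htends
  refine ⟨hT, ?_⟩
  have hev : ∀ᶠ x in l, (1:ℝ) ≤ pf x / pt x := hT.eventually_ge_atTop 1
  rw [hl, eventually_comap, eventually_atTop] at hev
  obtain ⟨a, ha⟩ := hev
  have hsub : {x | pf x < pt x} ⊆ Metric.closedBall 0 a := by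
    intro x hx
    simp only [Set.mem_setOf_eq] at hx
    simp only [Metric.mem_closedBall, dist_zero_right]
    by_contra h
    push_neg at h
    have h1 : (1:ℝ) ≤ pf x / pt x := ha ‖x‖ h.le x rfl
    have hpt_pos : 0 < pt x := by
      rw [hpt]
      exact div_pos (hG_pos x) hηt_pos
    have := (one_le_div hpt_pos).mp h1
    exact absurd this (not_le.mpr hx)
  exact Metric.isBounded_closedBall.subset hsub
end

section
/- Let p_f and p_t be probability densities on ℝ^m with p_t strictly positive, and suppose p_f(x)/p_t(x) → ∞ as ‖x‖ → ∞. Let L : ℝ^m → ℝ be a measurable, strictly positive function (a likelihood) with 0 < ∫ L(x) p_f(x) dx < ∞ and 0 < ∫ L(x) p_t(x) dx < ∞. Define the Bayesian posteriors q_f(x) = L(x) p_f(x) / ∫ L p_f and q_t(x) = L(x) p_t(x) / ∫ L p_t. Then q_f(x)/q_t(x) → ∞ as ‖x‖ → ∞; in particular, the set {x : q_f(x) < q_t(x)} is bounded. -/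
open MeasureTheory Filter

/-- Weak conservativeness (in the form `p_f / p_t → ∞` at infinity) is preserved by
Bayesian updates with a strictly positive likelihood `L`. -/
theorem bayesian_update_preserves_conservativeness
    (m : ℕ) (pf pt L : (Fin m → ℝ) → ℝ)
    (hpf_meas : Measurable pf) (hpt_meas : Measurable pt)
    (hpf_nonneg : ∀ x, 0 ≤ pf x) (hpt_pos : ∀ x, 0 < pt x)
    (hpf_int : ∫ x, pf x = 1) (hpt_int : ∫ x, pt x = 1)
    (hratio : Tendsto (fun x => pf x / pt x) (comap (fun x => ‖x‖) atTop) atTop)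
    (hL_meas : Measurable L) (hL_pos : ∀ x, 0 < L x)
    (hLf_int : Integrable (fun x => L x * pf x)) (hLf_pos : 0 < ∫ x, L x * pf x)
    (hLt_int : Integrable (fun x => L x * pt x)) (hLt_pos : 0 < ∫ x, L x * pt x)
    (qf qt : (Fin m → ℝ) → ℝ)
    (hqf : ∀ x, qf x = L x * pf x / ∫ y, L y * pf y)
    (hqt : ∀ x, qt x = L x * pt x / ∫ y, L y * pt y) :
    Tendsto (fun x => qf x / qt x) (comap (fun x => ‖x‖) atTop) atTop ∧
    Bornology.IsBounded {x | qf x < qt x} := by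
  set If := ∫ y, L y * pf y with hIf
  set It := ∫ y, L y * pt y with hIt
  have hkey : ∀ x, qf x / qt x = (pf x / pt x) * (It / If) := by
    intro x
    rw [hqf, hqt]
    have h1 : L x ≠ 0 := (hL_pos x).ne'
    have h2 : pt x ≠ 0 := (hpt_pos x).ne'
    have h3 : If ≠ 0 := hLf_pos.ne'
    have h4 : It ≠ 0 := hLt_pos.ne'
    field_simp
  have htend : Tendsto (fun x => qf x / qt x) (comap (fun x => ‖x‖) atTop) atTop := by
    have hc : 0 < It / If := div_pos hLt_pos hLf_pos
    simpa only [hkey] using hratio.atTop_mul_const hc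
  refine ⟨htend, ?_⟩
  have hev : ∀ᶠ x in comap (fun x : Fin m → ℝ => ‖x‖) atTop, (1 : ℝ) ≤ qf x / qt x :=
    htend.eventually (eventually_ge_atTop 1)
  rw [eventually_comap] at hev
  rcases (hev.exists_forall_of_atTop) with ⟨a, ha⟩
  have hsub : {x | qf x < qt x} ⊆ Metric.ball 0 a := by
    intro x hx
    by_contra hxa
    have hna : a ≤ ‖x‖ := by
      simpa [Metric.mem_ball, dist_eq_norm] using hxa
    have h1 : (1 : ℝ) ≤ qf x / qt x := ha ‖x‖ hna x rfl
    have hqtpos : 0 < qt x := by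
      rw [hqt]
      exact div_pos (mul_pos (hL_pos x) (hpt_pos x)) hLt_pos
    have : qt x ≤ qf x := (one_le_div hqtpos).mp h1
    exact absurd hx (not_lt.mpr this)
  exact (Metric.isBounded_ball).subset hsub
end

section
/- Let μ_c, μ_t ∈ ℝ^m and let Σ_c, Σ_t be symmetric positive definite m×m real matrices such that Σ_c − Σ_t is positive definite. Define the Gaussian densities p_c(x) = (2π)^{-m/2} det(Σ_c)^{-1/2} exp(−(1/2)(x−μ_c)ᵀ Σ_c^{-1} (x−μ_c)) and p_t(x) = (2π)^{-m/2} det(Σ_t)^{-1/2} exp(−(1/2)(x−μ_t)ᵀ Σ_t^{-1} (x−μ_t)). Then p_c(x)/p_t(x) → ∞ as ‖x‖ → ∞; in particular, the set {x : p_c(x) < p_t(x)} is bounded. -/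
open MeasureTheory Filter Matrix
open Bornology
open scoped ComplexOrder

/-!
The log-ratio `log (p_c / p_t)` is, up to a constant, half of
`(x - μt)ᵀ Σt⁻¹ (x - μt) - (x - μc)ᵀ Σc⁻¹ (x - μc)`, a quadratic polynomial whose quadratic
part is the form of `Σt⁻¹ - Σc⁻¹`. This matrix is positive definite because, with
`D = Σc - Σt`, `Σt⁻¹ - Σc⁻¹ = Σc⁻¹ (D + D Σt⁻¹ D) Σc⁻¹`. By compactness of the unit sphere a
positive definite form dominates `ε ‖x‖²`, which beats the linear terms, so the log-ratio
tends to `+∞`.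
-/

theorem exists_pos_mul_norm_sq_le {E : Type*} [NormedAddCommGroup E] [NormedSpace ℝ E]
    [FiniteDimensional ℝ E] {f : E → ℝ} (hf : Continuous f)
    (hsmul : ∀ (c : ℝ) (v : E), f (c • v) = c ^ 2 * f v) (hpos : ∀ v, v ≠ 0 → 0 < f v) :
    ∃ ε > 0, ∀ v, ε * ‖v‖ ^ 2 ≤ f v := by
  have hf0 : f 0 = 0 := by simpa using hsmul 0 0
  rcases subsingleton_or_nontrivial E with hE | hE
  · exact ⟨1, one_pos, fun v => by simp [Subsingleton.elim v 0, hf0]⟩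
  obtain ⟨u, hu, hmin⟩ := (isCompact_sphere (0 : E) 1).exists_isMinOn
    (NormedSpace.sphere_nonempty.mpr zero_le_one) hf.continuousOn
  refine ⟨f u, hpos u (ne_zero_of_mem_unit_sphere ⟨u, hu⟩), fun v => ?_⟩
  rcases eq_or_ne v 0 with rfl | hv
  · simp [hf0]
  have hv' : ‖v‖ ≠ 0 := norm_ne_zero_iff.mpr hv
  have hunit : ‖v‖⁻¹ • v ∈ Metric.sphere (0 : E) 1 := by simp [norm_smul, hv']
  calc f u * ‖v‖ ^ 2 ≤ f (‖v‖⁻¹ • v) * ‖v‖ ^ 2 := by gcongr; exact hmin hunit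
    _ = f v := by
      rw [hsmul, mul_comm, ← mul_assoc, ← mul_pow, mul_inv_cancel₀ hv', one_pow, one_mul]

theorem tendsto_cobounded_atTop_of_norm_sq_le {E : Type*} [SeminormedAddCommGroup E]
    {f : E → ℝ} {ε K : ℝ} (hε : 0 < ε) (hf : ∀ x, ε * ‖x‖ ^ 2 - K * ‖x‖ ≤ f x) :
    Tendsto f (cobounded E) atTop := by
  have hquad : Tendsto (fun r : ℝ => ε * r ^ 2 - K * r) atTop atTop := by
    have := tendsto_id.atTop_mul_atTop₀
      (tendsto_atTop_add_const_right atTop (-K) (tendsto_id.const_mul_atTop hε))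
    exact this.congr fun r => by simp only [id]; ring
  exact tendsto_atTop_mono hf (hquad.comp tendsto_norm_cobounded_atTop)

theorem Bornology.isBounded_setOf_lt_of_tendsto_cobounded {α : Type*} [Bornology α]
    {f : α → ℝ} (hf : Tendsto f (cobounded α) atTop) (c : ℝ) : IsBounded {x | f x < c} := by
  rw [isBounded_def]
  filter_upwards [hf.eventually_ge_atTop c] with x hx using not_lt.mpr hx

namespace Matrix

variable {n : Type*} [Fintype n]

theorem sub_dotProduct_mulVec_sub {R : Type*} [CommRing R] (S : Matrix n n R) (x a : n → R) :
    (x - a) ⬝ᵥ S *ᵥ (x - a) = x ⬝ᵥ S *ᵥ x - (S *ᵥ a + a ᵥ* S) ⬝ᵥ x + a ⬝ᵥ S *ᵥ a := by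
  simp only [mulVec_sub, dotProduct_sub, sub_dotProduct, add_dotProduct]
  rw [dotProduct_comm (S *ᵥ a) x, dotProduct_mulVec a S x]
  ring

theorem abs_dotProduct_le (w x : n → ℝ) : |w ⬝ᵥ x| ≤ (∑ i, |w i|) * ‖x‖ := by
  calc |∑ i, w i * x i| ≤ ∑ i, |w i| * |x i| := by
        simpa only [abs_mul] using Finset.abs_sum_le_sum_abs (fun i => w i * x i) Finset.univ
    _ ≤ ∑ i, |w i| * ‖x‖ := Finset.sum_le_sum fun i _ =>
        mul_le_mul_of_nonneg_left (norm_le_pi_norm x i) (abs_nonneg _)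
    _ = (∑ i, |w i|) * ‖x‖ := (Finset.sum_mul _ _ _).symm

theorem PosDef.inv_sub_inv {𝕜 : Type*} [RCLike 𝕜] [DecidableEq n] {A B : Matrix n n 𝕜}
    (hB : B.PosDef) (hAB : (A - B).PosDef) : (B⁻¹ - A⁻¹).PosDef := by
  set D := A - B
  have hA : A.PosDef := by simpa [D] using hB.add hAB
  have hAdet : IsUnit A.det := hA.isUnit.map detMonoidHom
  have hBdet : IsUnit B.det := hB.isUnit.map detMonoidHom
  -- `B⁻¹ - A⁻¹ = A⁻¹ D B⁻¹`, and `D B⁻¹ A = D + D B⁻¹ D` because `A = B + D`.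
  have key : B⁻¹ - A⁻¹ = (A⁻¹)ᴴ * (D + Dᴴ * B⁻¹ * D) * A⁻¹ := by
    have hDBA : D + D * B⁻¹ * D = D * B⁻¹ * A := by
      rw [show A = B + D by simp [D], mul_add, nonsing_inv_mul_cancel_right _ _ hBdet]
    rw [hA.inv.isHermitian.eq, hAB.isHermitian.eq, hDBA, mul_assoc A⁻¹,
      mul_nonsing_inv_cancel_right _ _ hAdet, ← neg_sub,
      Matrix.inv_sub_inv (by simp [hA.isUnit, hB.isUnit]), ← neg_sub A B, mul_neg, neg_mul,
      neg_neg, mul_assoc]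
  rw [key]
  exact (hAB.add_posSemidef (hB.inv.posSemidef.conjTranspose_mul_mul_same D)
    ).conjTranspose_mul_mul_same (mulVec_injective_iff_isUnit.mpr hA.inv.isUnit)

theorem PosDef.tendsto_dotProduct_mulVec_add_dotProduct {M : Matrix n n ℝ} (hM : M.PosDef)
    (w : n → ℝ) : Tendsto (fun x => x ⬝ᵥ M *ᵥ x + w ⬝ᵥ x) (cobounded (n → ℝ)) atTop := by
  have hsmul (c : ℝ) (v : n → ℝ) : c • v ⬝ᵥ M *ᵥ (c • v) = c ^ 2 * (v ⬝ᵥ M *ᵥ v) := by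
    simp only [mulVec_smul, dotProduct_smul, smul_dotProduct, smul_eq_mul]
    ring
  obtain ⟨ε, hε, hcoercive⟩ := exists_pos_mul_norm_sq_le (f := fun x => x ⬝ᵥ M *ᵥ x)
    (by fun_prop) hsmul fun v hv => by simpa using hM.dotProduct_mulVec_pos hv
  refine tendsto_cobounded_atTop_of_norm_sq_le hε (K := ∑ i, |w i|) fun x => ?_
  have := (abs_le.mp (abs_dotProduct_le w x)).1
  linarith [hcoercive x]

theorem PosDef.tendsto_sub_dotProduct_mulVec_sub {A B : Matrix n n ℝ} (hAB : (A - B).PosDef)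
    (a b : n → ℝ) :
    Tendsto (fun x => (x - a) ⬝ᵥ A *ᵥ (x - a) - (x - b) ⬝ᵥ B *ᵥ (x - b))
      (cobounded (n → ℝ)) atTop := by
  refine (tendsto_atTop_add_const_right _ (a ⬝ᵥ A *ᵥ a - b ⬝ᵥ B *ᵥ b)
    (hAB.tendsto_dotProduct_mulVec_add_dotProduct
      ((B *ᵥ b + b ᵥ* B) - (A *ᵥ a + a ᵥ* A)))).congr fun x => ?_
  rw [sub_dotProduct_mulVec_sub, sub_dotProduct_mulVec_sub]
  simp only [sub_mulVec, dotProduct_sub, sub_dotProduct, add_dotProduct]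
  ring

end Matrix

/-- If `Σ_c − Σ_t` is positive definite, then for the corresponding Gaussian
densities (possibly with different means) we have `p_c / p_t → ∞` at infinity;
in particular `{x | p_c x < p_t x}` is bounded. -/
theorem gaussian_posdef_ratio_tendsto_atTop
    (m : ℕ) (μc μt : Fin m → ℝ) (Sc St : Matrix (Fin m) (Fin m) ℝ)
    (hSc : Sc.PosDef) (hSt : St.PosDef) (hdiff : (Sc - St).PosDef)
    (pc pt : (Fin m → ℝ) → ℝ)
    (hpc : ∀ x, pc x = (2 * Real.pi) ^ (-(m : ℝ) / 2) * Sc.det ^ (-(1 : ℝ) / 2) *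
      Real.exp (-(1 / 2) * ((x - μc) ⬝ᵥ Sc⁻¹.mulVec (x - μc))))
    (hpt : ∀ x, pt x = (2 * Real.pi) ^ (-(m : ℝ) / 2) * St.det ^ (-(1 : ℝ) / 2) *
      Real.exp (-(1 / 2) * ((x - μt) ⬝ᵥ St⁻¹.mulVec (x - μt)))) :
    Tendsto (fun x => pc x / pt x) (comap (fun x => ‖x‖) atTop) atTop ∧
    Bornology.IsBounded {x | pc x < pt x} := by
  have hA : (0 : ℝ) < (2 * Real.pi) ^ (-(m : ℝ) / 2) := Real.rpow_pos_of_pos (by positivity) _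
  have hdetc := Real.rpow_pos_of_pos hSc.det_pos (-(1 : ℝ) / 2)
  have hdett := Real.rpow_pos_of_pos hSt.det_pos (-(1 : ℝ) / 2)
  have hpt_pos (x) : 0 < pt x := by rw [hpt]; positivity
  have hratio (x) : pc x / pt x = Sc.det ^ (-(1 : ℝ) / 2) / St.det ^ (-(1 : ℝ) / 2) *
      Real.exp (((x - μt) ⬝ᵥ St⁻¹ *ᵥ (x - μt) - (x - μc) ⬝ᵥ Sc⁻¹ *ᵥ (x - μc)) / 2) := by
    rw [hpc, hpt, mul_assoc, mul_assoc, mul_div_mul_left _ _ hA.ne', mul_div_mul_comm,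
      ← Real.exp_sub]
    congr 2
    ring
  have htendsto : Tendsto (fun x => pc x / pt x) (cobounded (Fin m → ℝ)) atTop := by
    simp only [hratio]
    exact (Real.tendsto_exp_atTop.comp
      (((hSt.inv_sub_inv hdiff).tendsto_sub_dotProduct_mulVec_sub μt μc).atTop_div_const
        two_pos)).const_mul_atTop (div_pos hdetc hdett)
  rw [comap_norm_atTop]
  refine ⟨htendsto, (isBounded_setOf_lt_of_tendsto_cobounded htendsto 1).subset ?_⟩
  exact fun x hx => (div_lt_one (hpt_pos x)).mpr hx
end

section
/- Let λ > 0 and let p be the exponential density p(x) = λ e^{−λx} for x ≥ 0 and p(x) = 0 for x < 0. Let α ∈ (0,1). Then: (1) the interval [0, −log(1−α)/λ] satisfies ∫ over it of p equal to exactly α and has Lebesgue measure −log(1−α)/λ; and (2) every Lebesgue-measurable set X ⊆ ℝ with ∫_X p ≥ α has Lebesgue measure at least −log(1−α)/λ. Hence [0, −log(1−α)/λ] is a minimum volume set for the Exponential(λ) distribution with area α. -/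
/-!
On `[0, c]` with `c = -log (1 - α) / λ` the exponential density is at least `λ (1 - α)`, and
off it at most `λ (1 - α)`; the mass of `[0, c]` is `1 - e^{-λc} = α`. Any such superlevel set
`S` of a density has least measure among sets `X` of at least its mass: the mass of `S \ X` must
be compensated by that of `X \ S`, where the density is smaller, so `X \ S` is at least as large.
-/

open MeasureTheory ProbabilityTheory Real Set

section LevelSet

variable {Ω : Type*} [MeasurableSpace Ω] {μ : Measure Ω} {f : Ω → ℝ} {S X : Set Ω} {m : ℝ}

theorem measure_le_of_setIntegral_le (hf : Integrable f μ) (hm : 0 < m)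
    (hS : MeasurableSet S) (hX : MeasurableSet X)
    (h_ge : ∀ x ∈ S, m ≤ f x) (h_le : ∀ x ∉ S, f x ≤ m)
    (hSX : ∫ x in S, f x ∂μ ≤ ∫ x in X, f x ∂μ) : μ S ≤ μ X := by
  have hS_fin : μ S < ⊤ :=
    (measure_mono fun x hx => h_ge x hx).trans_lt (hf.measure_ge_lt_top hm)
  by_cases hXS_top : μ (X \ S) = ⊤
  · exact le_top.trans_eq ((measure_mono_top sdiff_subset hXS_top).symm)
  have hSX_fin : μ (S \ X) ≠ ⊤ := (measure_mono sdiff_subset |>.trans_lt hS_fin).ne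
  have h_diff : m * μ.real (S \ X) ≤ m * μ.real (X \ S) := by
    have hS_split := integral_inter_add_sdiff hX hf.integrableOn (s := S) (μ := μ)
    have hX_split := integral_inter_add_sdiff hS hf.integrableOn (s := X) (μ := μ)
    rw [inter_comm] at hX_split
    calc m * μ.real (S \ X)
        ≤ ∫ x in S \ X, f x ∂μ :=
          setIntegral_ge_of_const_le_real (hS.diff hX) hSX_fin
            (fun x hx => h_ge x hx.1) hf.integrableOn
      _ ≤ ∫ x in X \ S, f x ∂μ := by linarith
      _ ≤ ∫ _ in X \ S, m ∂μ :=
          setIntegral_mono_on hf.integrableOn (integrableOn_const hXS_top) (hX.diff hS)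
            fun x hx => h_le x hx.2
      _ = m * μ.real (X \ S) := by rw [setIntegral_const, smul_eq_mul, mul_comm]
  have h_diff' : μ (S \ X) ≤ μ (X \ S) :=
    (ENNReal.toReal_le_toReal hSX_fin hXS_top).mp (le_of_mul_le_mul_left h_diff hm)
  calc μ S = μ (S ∩ X) + μ (S \ X) := (measure_inter_add_sdiff S hX).symm
    _ ≤ μ (X ∩ S) + μ (X \ S) := by rw [inter_comm]; gcongr
    _ = μ X := measure_inter_add_sdiff X hS

end LevelSet

section ExponentialPDF

theorem exponentialPDFReal_eq_ite (r x : ℝ) :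
    exponentialPDFReal r x = if 0 ≤ x then r * exp (-(r * x)) else 0 := by
  simp only [exponentialPDFReal, gammaPDFReal, rpow_one, Gamma_one, div_one, sub_self,
    rpow_zero, mul_one]

variable {r c x : ℝ}

theorem integrable_exponentialPDFReal (hr : 0 < r) : Integrable (exponentialPDFReal r) := by
  have h_ind : exponentialPDFReal r = (Ici 0).indicator fun x => r * exp (-(r * x)) := by
    ext x
    simp only [exponentialPDFReal_eq_ite, indicator, mem_Ici]
  rw [h_ind, integrable_indicator_iff measurableSet_Ici]
  simp only [← neg_mul]
  exact ((integrableOn_Ici_iff_integrableOn_Ioi).mpr (exp_neg_integrableOn_Ioi 0 hr)).const_mul r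

theorem setIntegral_exponentialPDFReal_Icc (hc : 0 ≤ c) :
    ∫ x in Icc 0 c, exponentialPDFReal r x = 1 - exp (-(r * c)) := by
  have h_eqOn : ∀ x ∈ Icc 0 c, exponentialPDFReal r x = r * exp (-(r * x)) := fun x hx => by
    rw [exponentialPDFReal_eq_ite, if_pos hx.1]
  rw [setIntegral_congr_fun measurableSet_Icc h_eqOn, integral_Icc_eq_integral_Ioc,
    ← intervalIntegral.integral_of_le hc,
    intervalIntegral.integral_eq_sub_of_hasDerivAt (fun x _ => hasDerivAt_neg_exp_mul_exp)
      ((by fun_prop : Continuous fun x => r * exp (-(r * x))).intervalIntegrable _ _)]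
  simp only [mul_zero, neg_zero, exp_zero]
  ring

theorem exponentialPDFReal_ge_of_mem_Icc (hr : 0 ≤ r) (hx : x ∈ Icc 0 c) :
    r * exp (-(r * c)) ≤ exponentialPDFReal r x := by
  rw [exponentialPDFReal_eq_ite, if_pos hx.1]
  gcongr
  exact hx.2

theorem exponentialPDFReal_le_of_notMem_Icc (hr : 0 ≤ r) (hx : x ∉ Icc 0 c) :
    exponentialPDFReal r x ≤ r * exp (-(r * c)) := by
  rw [exponentialPDFReal_eq_ite]
  split_ifs with hx0
  · have hcx : c ≤ x := (lt_of_not_ge fun hxc => hx ⟨hx0, hxc⟩).le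
    gcongr
  · positivity

end ExponentialPDF

/-- For the Exponential(λ) density, the interval `[0, −log(1−α)/λ]` has probability
exactly `α` and Lebesgue measure `−log(1−α)/λ`, and any measurable set with
probability at least `α` has Lebesgue measure at least `−log(1−α)/λ`: it is a
minimum volume set with area `α`. -/
theorem exponential_minimum_volume_set
    (l : ℝ) (hl : 0 < l) (α : ℝ) (hα : α ∈ Set.Ioo (0:ℝ) 1)
    (p : ℝ → ℝ) (hp : ∀ x, p x = if 0 ≤ x then l * Real.exp (-l * x) else 0) :
    (∫ x in Set.Icc (0:ℝ) (-Real.log (1 - α) / l), p x) = α ∧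
    volume (Set.Icc (0:ℝ) (-Real.log (1 - α) / l)) =
      ENNReal.ofReal (-Real.log (1 - α) / l) ∧
    ∀ X : Set ℝ, MeasurableSet X → α ≤ (∫ x in X, p x) →
      ENNReal.ofReal (-Real.log (1 - α) / l) ≤ volume X := by
  obtain rfl : p = exponentialPDFReal l := funext fun x => by
    rw [hp, exponentialPDFReal_eq_ite, neg_mul]
  set c := -log (1 - α) / l
  have h1α : 0 < 1 - α := sub_pos.mpr hα.2
  have hc : 0 ≤ c := div_nonneg (neg_nonneg.mpr (log_nonpos h1α.le (by linarith [hα.1]))) hl.le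
  have h_exp : exp (-(l * c)) = 1 - α := by
    rw [mul_div_cancel₀ _ hl.ne', neg_neg, exp_log h1α]
  have h_mass : ∫ x in Icc 0 c, exponentialPDFReal l x = α := by
    rw [setIntegral_exponentialPDFReal_Icc hc, h_exp, sub_sub_cancel]
  refine ⟨h_mass, by rw [volume_Icc, sub_zero], fun X hX hαX => ?_⟩
  rw [← sub_zero c, ← volume_Icc]
  exact measure_le_of_setIntegral_le (integrable_exponentialPDFReal hl)
    (mul_pos hl (h_exp ▸ exp_pos _)) measurableSet_Icc hX
    (fun x hx => exponentialPDFReal_ge_of_mem_Icc hl.le hx)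
    (fun x hx => exponentialPDFReal_le_of_notMem_Icc hl.le hx) (h_mass.trans_le hαX)
end

section
/- Let γ denote the standard Gaussian measure on ℝ, i.e. the measure with density φ(x) = (2π)^{-1/2} e^{−x²/2} with respect to Lebesgue measure. For every c > 0 and every Lebesgue-measurable set A ⊆ ℝ with γ(A) ≥ γ([−c, c]), the Lebesgue measure of A is at least 2c. Hence the symmetric interval [−c, c] is a minimum volume set for the standard Gaussian with area γ([−c,c]). -/
open MeasureTheory

/-!
If `t ≤ f` on `s` and `f ≤ t` off `s`, then `∫_s f ≤ ∫_A f` gives, after cancelling `∫_{s ∩ A} f`,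
`t • μ (s \ A) ≤ ∫_{s \ A} f ≤ ∫_{A \ s} f ≤ t • μ (A \ s)`, so `μ s ≤ μ A` when `t > 0`.
The Gaussian density is a decreasing function of `x²`, so `[-c, c]` is such a superlevel set
with `t = gaussianDensity c`.
-/

section Superlevel

variable {α : Type*} [MeasurableSpace α] {μ : Measure α} {f : α → ℝ} {s A : Set α}
  {t : ℝ}

theorem measure_le_of_setIntegral_le_of_superlevel (hf : Integrable f μ) (hs : MeasurableSet s)
    (hsμ : μ s ≠ ⊤) (hA : MeasurableSet A) (ht : 0 < t) (hfs : ∀ x ∈ s, t ≤ f x)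
    (hfsc : ∀ x ∉ s, f x ≤ t) (hle : ∫ x in s, f x ∂μ ≤ ∫ x in A, f x ∂μ) :
    μ s ≤ μ A := by
  rw [← measure_inter_add_sdiff s hA, ← measure_inter_add_sdiff A hs, Set.inter_comm]
  refine add_le_add le_rfl ?_
  by_cases hAs : μ (A \ s) = ⊤
  · simp [hAs]
  have hsA : μ (s \ A) ≠ ⊤ := measure_ne_top_of_subset Set.sdiff_subset hsμ
  have hint_sA : t * μ.real (s \ A) ≤ ∫ x in s \ A, f x ∂μ := by
    simpa [setIntegral_const, mul_comm] using setIntegral_mono_on (integrableOn_const hsA)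
      hf.integrableOn (hs.diff hA) fun x hx => hfs x hx.1
  have hint_As : ∫ x in A \ s, f x ∂μ ≤ t * μ.real (A \ s) := by
    simpa [setIntegral_const, mul_comm] using setIntegral_mono_on hf.integrableOn
      (integrableOn_const hAs) (hA.diff hs) fun x hx => hfsc x hx.2
  have hdiff : ∫ x in s \ A, f x ∂μ ≤ ∫ x in A \ s, f x ∂μ := by
    have hsplit_s := integral_inter_add_sdiff hA (hf.integrableOn (s := s))
    have hsplit_A := integral_inter_add_sdiff hs (hf.integrableOn (s := A))
    rw [Set.inter_comm] at hsplit_A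
    linarith
  have hreal : μ.real (s \ A) ≤ μ.real (A \ s) :=
    le_of_mul_le_mul_left (hint_sA.trans (hdiff.trans hint_As)) ht
  exact (ENNReal.toReal_le_toReal hsA hAs).mp hreal

end Superlevel

section Gaussian

noncomputable def gaussianDensity (x : ℝ) : ℝ :=
  (2 * Real.pi) ^ (-(1:ℝ)/2) * Real.exp (-x ^ 2 / 2)

theorem gaussianDensity_pos (x : ℝ) : 0 < gaussianDensity x := by
  unfold gaussianDensity
  positivity

theorem gaussianDensity_le_of_sq_le {x y : ℝ} (h : x ^ 2 ≤ y ^ 2) :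
    gaussianDensity y ≤ gaussianDensity x := by
  unfold gaussianDensity
  gcongr

theorem integrable_gaussianDensity : Integrable gaussianDensity := by
  refine ((integrable_exp_neg_mul_sq (by norm_num : (0:ℝ) < 1 / 2)).const_mul
    ((2 * Real.pi) ^ (-(1:ℝ)/2))).congr (Filter.Eventually.of_forall fun x => ?_)
  simp only [gaussianDensity]
  ring_nf

theorem mem_Icc_neg_iff_sq_le {x c : ℝ} (hc : 0 ≤ c) :
    x ∈ Set.Icc (-c) c ↔ x ^ 2 ≤ c ^ 2 := by
  rw [Set.mem_Icc, ← abs_le, sq_le_sq, abs_of_nonneg hc]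

end Gaussian

/-- Symmetric intervals `[−c, c]` are minimum volume sets for the standard Gaussian
measure on ℝ: any measurable set with at least as much Gaussian probability as
`[−c, c]` has Lebesgue measure at least `2c`. -/
theorem gaussian_symmetric_interval_minimum_volume
    (c : ℝ) (hc : 0 < c) (A : Set ℝ) (hA : MeasurableSet A)
    (hge : (∫ x in Set.Icc (-c) c, (2 * Real.pi) ^ (-(1:ℝ)/2) * Real.exp (-x ^ 2 / 2)) ≤
      ∫ x in A, (2 * Real.pi) ^ (-(1:ℝ)/2) * Real.exp (-x ^ 2 / 2)) :
    ENNReal.ofReal (2 * c) ≤ volume A := by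
  have hvol : volume (Set.Icc (-c) c) = ENNReal.ofReal (2 * c) := by
    rw [Real.volume_Icc]; ring_nf
  rw [← hvol]
  refine measure_le_of_setIntegral_le_of_superlevel (f := gaussianDensity)
    integrable_gaussianDensity measurableSet_Icc measure_Icc_lt_top.ne hA
    (gaussianDensity_pos c) (fun x hx => ?_) (fun x hx => ?_) hge
  · exact gaussianDensity_le_of_sq_le ((mem_Icc_neg_iff_sq_le hc.le).mp hx)
  · rw [mem_Icc_neg_iff_sq_le hc.le, not_le] at hx
    exact gaussianDensity_le_of_sq_le hx.le
end

section
/- Let Σ_t and Σ_c be symmetric positive definite m×m real matrices. Then Σ_c − Σ_t is positive semidefinite if and only if for every r ≥ 0 the ellipsoid {x ∈ ℝ^m : xᵀ Σ_t^{-1} x ≤ r} is contained in the ellipsoid {x ∈ ℝ^m : xᵀ Σ_c^{-1} x ≤ r}. -/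
/-!
Completing the square shows `xᵀ A⁻¹ x = max_y (2 xᵀ y - yᵀ A y)` for positive definite `A`, the
maximum being attained at `y = A⁻¹ x`. The right-hand side decreases as `A` grows in the Loewner
order, so inversion is antitone there, and applying this to `A⁻¹` as well gives
`Σ_t ⪯ Σ_c ↔ Σ_c⁻¹ ⪯ Σ_t⁻¹`. The latter is the pointwise inequality `xᵀ Σ_c⁻¹ x ≤ xᵀ Σ_t⁻¹ x`,
which is the containment of every ellipsoid (take `r = xᵀ Σ_t⁻¹ x` for the converse).
-/

open Matrix

namespace Matrix

variable {n : Type*} [Fintype n]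

lemma posSemidef_sub_iff_forall_dotProduct_mulVec_le {A B : Matrix n n ℝ}
    (hA : A.IsHermitian) (hB : B.IsHermitian) :
    (B - A).PosSemidef ↔ ∀ x, x ⬝ᵥ A *ᵥ x ≤ x ⬝ᵥ B *ᵥ x := by
  have hform (x : n → ℝ) : x ⬝ᵥ (B - A) *ᵥ x = x ⬝ᵥ B *ᵥ x - x ⬝ᵥ A *ᵥ x := by
    rw [sub_mulVec, dotProduct_sub]
  refine ⟨fun h x => ?_, fun h => .of_dotProduct_mulVec_nonneg (hB.sub hA) fun x => ?_⟩
  · simpa [hform] using h.dotProduct_mulVec_nonneg x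
  · simpa [hform] using h x

variable [DecidableEq n]

lemma PosDef.two_mul_dotProduct_sub_le_dotProduct_inv_mulVec {A : Matrix n n ℝ} (hA : A.PosDef)
    (x y : n → ℝ) : 2 * (x ⬝ᵥ y) - y ⬝ᵥ A *ᵥ y ≤ x ⬝ᵥ A⁻¹ *ᵥ x := by
  set u := A⁻¹ *ᵥ x
  have hAu : A *ᵥ u = x := by
    simp [u, mulVec_mulVec, mul_nonsing_inv _ ((isUnit_iff_isUnit_det _).1 hA.isUnit)]
  have hsymm (v w : n → ℝ) : v ⬝ᵥ A *ᵥ w = w ⬝ᵥ A *ᵥ v := by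
    rw [dotProduct_mulVec, ← mulVec_transpose, (isHermitian_iff_isSymm.1 hA.isHermitian).eq,
      dotProduct_comm]
  have hsq := hA.posSemidef.dotProduct_mulVec_nonneg (y - u)
  simp only [star_trivial, mulVec_sub, dotProduct_sub, sub_dotProduct, hsymm u y, hAu] at hsq
  rw [dotProduct_comm u x] at hsq
  linarith [dotProduct_comm x y]

lemma PosDef.posSemidef_inv_sub_inv {A B : Matrix n n ℝ} (hA : A.PosDef) (hB : B.PosDef)
    (hAB : (B - A).PosSemidef) : (A⁻¹ - B⁻¹).PosSemidef := by
  refine (posSemidef_sub_iff_forall_dotProduct_mulVec_le hB.inv.isHermitian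
    hA.inv.isHermitian).2 fun x => ?_
  set y := B⁻¹ *ᵥ x
  have hBy : B *ᵥ y = x := by
    simp [y, mulVec_mulVec, mul_nonsing_inv _ ((isUnit_iff_isUnit_det _).1 hB.isUnit)]
  have hAB' := (posSemidef_sub_iff_forall_dotProduct_mulVec_le hA.isHermitian hB.isHermitian).1 hAB
  calc x ⬝ᵥ y = 2 * (x ⬝ᵥ y) - y ⬝ᵥ B *ᵥ y := by rw [hBy, dotProduct_comm]; ring
    _ ≤ 2 * (x ⬝ᵥ y) - y ⬝ᵥ A *ᵥ y := by linarith [hAB' y]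
    _ ≤ x ⬝ᵥ A⁻¹ *ᵥ x := hA.two_mul_dotProduct_sub_le_dotProduct_inv_mulVec x y

lemma PosDef.posSemidef_inv_sub_inv_iff {A B : Matrix n n ℝ} (hA : A.PosDef) (hB : B.PosDef) :
    (A⁻¹ - B⁻¹).PosSemidef ↔ (B - A).PosSemidef := by
  refine ⟨fun h => ?_, hA.posSemidef_inv_sub_inv hB⟩
  simpa only [nonsing_inv_nonsing_inv _ ((isUnit_iff_isUnit_det _).1 hA.isUnit),
    nonsing_inv_nonsing_inv _ ((isUnit_iff_isUnit_det _).1 hB.isUnit)]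
    using hB.inv.posSemidef_inv_sub_inv hA.inv h

end Matrix

/-- For symmetric positive definite matrices, `Σ_c − Σ_t ⪰ 0` if and only if every
ellipsoid `{x : xᵀ Σ_t⁻¹ x ≤ r}` is contained in the corresponding ellipsoid
`{x : xᵀ Σ_c⁻¹ x ≤ r}`. -/
theorem posSemidef_iff_ellipsoid_containment
    (m : ℕ) (St Sc : Matrix (Fin m) (Fin m) ℝ)
    (hSt : St.PosDef) (hSc : Sc.PosDef) :
    (Sc - St).PosSemidef ↔
      ∀ r : ℝ, 0 ≤ r →
        {x : Fin m → ℝ | x ⬝ᵥ St⁻¹.mulVec x ≤ r} ⊆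
          {x : Fin m → ℝ | x ⬝ᵥ Sc⁻¹.mulVec x ≤ r} := by
  rw [← hSt.posSemidef_inv_sub_inv_iff hSc,
    posSemidef_sub_iff_forall_dotProduct_mulVec_le hSc.inv.isHermitian hSt.inv.isHermitian]
  refine ⟨fun h r _ x hx => (h x).trans hx, fun h x => h _ ?_ (le_refl (x ⬝ᵥ St⁻¹ *ᵥ x))⟩
  simpa using hSt.inv.posSemidef.dotProduct_mulVec_nonneg x
end

section
/- Let p_t and p_c be continuous probability densities on ℝ^m that attain their suprema, and suppose the maximum likelihood mode sets ℳ_t = {x : p_t(x) = sup p_t} and ℳ_c = {x : p_c(x) = sup p_c} are finite and nonempty. Suppose p_c is strictly conservative with respect to p_t: for every α ∈ (0,1], every minimum volume set of p_t with area α is contained in some minimum volume set of p_c with area α. Then ℳ_t ⊆ ℳ_c: every maximum likelihood mode of p_t is a maximum likelihood mode of p_c. -/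
/-!
Suppose a mode `x₀` of `p_t` is not a mode of `p_c`, so `p_c < a` near `x₀` while `p_c > b > a`
on a nonempty open set `W`. Because `ℳ_t` is null, thin superlevel sets `{t ≤ p_t}` around `x₀`
are minimum volume sets of arbitrarily small area `α`; a minimum volume set `M_c` of `p_c`
containing one is a neighbourhood of `x₀`, yet has small volume because `ℳ_c` is null. Then most
of `W` lies outside `M_c`, and replacing a small neighbourhood of `x₀` in `M_c` by a piece of
`W \ M_c` of the same `p_c`-mass but smaller volume contradicts the minimality of `M_c`.
-/

open MeasureTheory

/-- `M` is a minimum volume set for the density `p` with area `α`: it is measurable,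
has probability at least `α`, and has minimal Lebesgue measure among all measurable
sets of probability at least `α`. -/
def IsMinVolSet (m : ℕ) (p : (Fin m → ℝ) → ℝ) (α : ℝ) (M : Set (Fin m → ℝ)) : Prop :=
  MeasurableSet M ∧ α ≤ (∫ x in M, p x) ∧
    ∀ X : Set (Fin m → ℝ), MeasurableSet X → α ≤ (∫ x in X, p x) →
      volume M ≤ volume X

open Set Filter Metric Topology
open scoped ENNReal

section Haar

variable {E : Type*} [NormedAddCommGroup E] [NormedSpace ℝ E] [MeasurableSpace E] [BorelSpace E]
  [FiniteDimensional ℝ E] [Nontrivial E] (μ : Measure E) [μ.IsAddHaarMeasure]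

theorem continuous_measureReal_inter_closedBall {s : Set E} (hs : μ s ≠ ∞) :
    Continuous fun R : ℝ => μ.real (s ∩ closedBall 0 R) := by
  have hint : ∀ R : ℝ, μ.real (s ∩ closedBall 0 R) =
      ∫ x in s, (closedBall (0 : E) R).indicator 1 x ∂μ := fun R => by
    rw [integral_indicator_one measurableSet_closedBall,
      measureReal_restrict_apply measurableSet_closedBall, inter_comm]
  simp only [hint]
  refine continuous_iff_continuousAt.2 fun R₀ => continuousAt_of_dominated (bound := fun _ => 1)
    (Eventually.of_forall fun R =>
      (stronglyMeasurable_one.indicator measurableSet_closedBall).aestronglyMeasurable)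
    (Eventually.of_forall fun R => Eventually.of_forall fun x => ?_) (integrableOn_const hs) ?_
  · by_cases hx : x ∈ closedBall (0 : E) R <;> simp [hx]
  · refine ae_restrict_of_ae ?_
    filter_upwards [measure_eq_zero_iff_ae_notMem.1 (Measure.addHaar_sphere μ 0 R₀)] with x hx
    rw [mem_sphere_zero_iff_norm] at hx
    rcases lt_or_gt_of_ne hx with hlt | hgt
    · refine continuousAt_const.congr (f := fun _ => (1 : ℝ)) ?_
      filter_upwards [eventually_gt_nhds hlt] with R hR
      simp [mem_closedBall_zero_iff.2 hR.le]
    · refine continuousAt_const.congr (f := fun _ => (0 : ℝ)) ?_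
      filter_upwards [eventually_lt_nhds hgt] with R hR
      simp [hR]

theorem exists_subset_measure_eq {s : Set E} (hs : MeasurableSet s) {r : ℝ≥0∞} (hr : r < μ s) :
    ∃ t ⊆ s, MeasurableSet t ∧ μ t = r := by
  have hlim := tendsto_measure_iUnion_atTop (μ := μ) (s := fun n : ℕ => s ∩ closedBall 0 n)
    fun i j hij => inter_subset_inter_right _ (closedBall_subset_closedBall (Nat.cast_le.2 hij))
  rw [← inter_iUnion, iUnion_closedBall_nat, inter_univ] at hlim
  obtain ⟨n, hn⟩ := (hlim.eventually (lt_mem_nhds hr)).exists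
  set s' := s ∩ closedBall (0 : E) n
  have hs' : μ s' ≠ ∞ := ((measure_mono inter_subset_right).trans_lt measure_closedBall_lt_top).ne
  set g := fun R : ℝ => μ.real (s' ∩ closedBall 0 R)
  have hg0 : g 0 = 0 := by
    simp [g, closedBall_zero, measureReal_def, measure_mono_null inter_subset_right
      (measure_singleton (0 : E))]
  have hgn : g n = μ.real s' := by
    simp only [g, s', inter_assoc, inter_self]
  obtain ⟨R, -, hR⟩ := intermediate_value_Icc (Nat.cast_nonneg n)
    (continuous_measureReal_inter_closedBall μ hs').continuousOn
    ⟨hg0.trans_le ENNReal.toReal_nonneg, (ENNReal.toReal_mono hs' hn.le).trans_eq hgn.symm⟩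
  refine ⟨s' ∩ closedBall 0 R, inter_subset_left.trans inter_subset_left,
    (hs.inter measurableSet_closedBall).inter measurableSet_closedBall, ?_⟩
  rw [← ENNReal.ofReal_toReal (measure_ne_top_of_subset inter_subset_left hs'),
    ← measureReal_def, show μ.real _ = r.toReal from hR, ENNReal.ofReal_toReal (ne_top_of_lt hn)]

end Haar

section Superlevel

variable {X : Type*} [MeasurableSpace X] {μ : Measure X} {p : X → ℝ}

theorem ciSup_pos_of_integral_pos (hbdd : BddAbove (range p)) (h : 0 < ∫ x, p x ∂μ) :
    0 < ⨆ x, p x := by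
  by_contra! hle
  exact h.not_ge (integral_nonpos fun x => (le_ciSup hbdd x).trans hle)

theorem exists_superlevel_measure_lt (hp : Measurable p) (hi : Integrable p μ)
    (hbdd : BddAbove (range p)) (hnull : μ {x | p x = ⨆ y, p y} = 0) (hsup : 0 < ⨆ y, p y)
    {c : ℝ≥0∞} (hc : 0 < c) : ∃ t, 0 < t ∧ t < ⨆ y, p y ∧ μ {x | t ≤ p x} < c := by
  set S := ⨆ y, p y
  have hlim := tendsto_measure_biInter_gt (μ := μ) (s := fun δ => {x | S - δ ≤ p x}) (a := 0)
    (fun _ _ => (measurableSet_le measurable_const hp).nullMeasurableSet)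
    (fun i j _ hij x (hx : S - i ≤ p x) => show S - j ≤ p x by linarith)
    ⟨S / 2, half_pos hsup, (hi.measure_ge_lt_top (by linarith : 0 < S - S / 2)).ne⟩
  have hinter : μ (⋂ δ > 0, {x | S - δ ≤ p x}) = 0 := by
    refine measure_mono_null (fun x hx => ?_) hnull
    simp only [mem_iInter, mem_ofPred_eq] at hx
    exact le_antisymm (le_ciSup hbdd x) (le_of_forall_sub_le hx)
  rw [hinter] at hlim
  obtain ⟨δ, hδc, hδS, hδ⟩ := ((hlim.eventually (gt_mem_nhds hc)).and
    ((eventually_nhdsWithin_of_eventually_nhds (eventually_lt_nhds hsup)).and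
      eventually_mem_nhdsWithin)).exists
  exact ⟨S - δ, by linarith, by linarith [mem_Ioi.1 hδ], hδc⟩

theorem integral_superlevel_pos [TopologicalSpace X] [μ.IsOpenPosMeasure] (hp : Measurable p)
    (hi : Integrable p μ) {t : ℝ} (ht : 0 < t) {y : X} (hy : {x | t ≤ p x} ∈ 𝓝 y) :
    0 < ∫ x in {x | t ≤ p x}, p x ∂μ := by
  have hfin := hi.measure_ge_lt_top ht
  calc 0 < t * μ.real {x | t ≤ p x} :=
        mul_pos ht (ENNReal.toReal_pos (μ.measure_pos_of_mem_nhds hy).ne' hfin.ne)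
    _ ≤ ∫ x in {x | t ≤ p x}, p x ∂μ :=
        setIntegral_ge_of_const_le_real (measurableSet_le measurable_const hp) hfin.ne
          (fun _ hx => hx) hi.integrableOn

end Superlevel

section MinVolSet

variable {m : ℕ} {p : (Fin m → ℝ) → ℝ}

theorem isMinVolSet_superlevel (hp : Measurable p) (hi : Integrable p) {t : ℝ} (ht : 0 < t) :
    IsMinVolSet m p (∫ x in {x | t ≤ p x}, p x) {x | t ≤ p x} := by
  set A := {x | t ≤ p x}
  have hA : MeasurableSet A := measurableSet_le measurable_const hp
  refine ⟨hA, le_rfl, fun X hX hAX => ?_⟩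
  rcases eq_or_ne (volume X) ∞ with hXtop | hXfin
  · simp [hXtop]
  have hAfin := hi.measure_ge_lt_top ht
  -- `p - t` is nonnegative exactly on `A`, so no set collects more of it than `A` does
  have hexcess : ∫ x in X, (p x - t) ≤ ∫ x in A, (p x - t) := by
    rw [← integral_indicator hX, ← integral_indicator hA]
    refine integral_mono ((hi.integrableOn.sub (integrableOn_const hXfin)).integrable_indicator hX)
      ((hi.integrableOn.sub (integrableOn_const hAfin.ne)).integrable_indicator hA) fun x => ?_
    by_cases hxX : x ∈ X <;> by_cases hxA : x ∈ A <;>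
      simp only [indicator_of_mem, indicator_of_notMem, hxX, hxA, le_refl, not_false_eq_true]
    · exact sub_nonpos.2 (not_le.1 hxA).le
    · exact sub_nonneg.2 hxA
  rw [integral_sub hi.integrableOn (integrableOn_const hXfin),
    integral_sub hi.integrableOn (integrableOn_const hAfin.ne), setIntegral_const,
    setIntegral_const, smul_eq_mul, smul_eq_mul] at hexcess
  have hreal : volume.real A ≤ volume.real X := le_of_mul_le_mul_right (by linarith) ht
  exact (ENNReal.toReal_le_toReal hAfin.ne hXfin).1 hreal

theorem IsMinVolSet.volume_lt_of_density_lt [NeZero m] {α a b : ℝ} {M U G : Set (Fin m → ℝ)}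
    (hM : IsMinVolSet m p α M) (hMfin : volume M ≠ ∞) (hi : Integrable p)
    (hU : MeasurableSet U) (hUM : U ⊆ M) (hU0 : volume U ≠ 0) (hpU : ∀ x ∈ U, p x ≤ a)
    (hG : MeasurableSet G) (hGM : Disjoint G M) (hpG : ∀ x ∈ G, b ≤ p x)
    (ha : 0 < a) (hab : a < b) : volume G < volume U := by
  obtain ⟨hMm, hαM, hmin⟩ := hM
  by_contra! hUG
  have hUfin : volume U ≠ ∞ := measure_ne_top_of_subset hUM hMfin
  have hu : 0 < volume.real U := ENNReal.toReal_pos hU0 hUfin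
  -- replace `U` by some `S ⊆ G` of volume `τ < |U|`; `τ` is chosen so that `b τ = a |U|`
  set τ := a / b * volume.real U
  have hτ : 0 ≤ τ := mul_nonneg (div_nonneg ha.le (ha.trans hab).le) hu.le
  have hτU : ENNReal.ofReal τ < volume U := by
    rw [ENNReal.ofReal_lt_iff_lt_toReal hτ hUfin]
    exact mul_lt_of_lt_one_left hu ((div_lt_one (ha.trans hab)).2 hab)
  obtain ⟨S, hSG, hS, hSvol⟩ := exists_subset_measure_eq volume hG (hτU.trans_le hUG)
  have hSfin : volume S ≠ ∞ := hSvol ▸ ENNReal.ofReal_ne_top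
  have hmass : α ≤ ∫ x in (M \ U) ∪ S, p x := by
    have hUmass : ∫ x in U, p x ≤ a * volume.real U := by
      simpa [mul_comm] using setIntegral_mono_on hi.integrableOn (integrableOn_const hUfin) hU hpU
    have hSmass : b * volume.real S ≤ ∫ x in S, p x :=
      setIntegral_ge_of_const_le_real hS hSfin (fun x hx => hpG x (hSG hx)) hi.integrableOn
    have hbτ : b * volume.real S = a * volume.real U := by
      rw [measureReal_def, hSvol, ENNReal.toReal_ofReal hτ]
      simp only [τ]
      field_simp [(ha.trans hab).ne']
    have hdisj : Disjoint (M \ U) S :=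
      disjoint_left.2 fun x hx hxS => hGM.notMem_of_mem_left (hSG hxS) hx.1
    rw [setIntegral_union hdisj hS hi.integrableOn hi.integrableOn,
      setIntegral_sdiff hU hi.integrableOn hUM]
    linarith
  have hvol : volume ((M \ U) ∪ S) < volume M :=
    calc volume ((M \ U) ∪ S) ≤ volume (M \ U) + volume S := measure_union_le _ _
      _ < volume (M \ U) + volume U :=
        ENNReal.add_lt_add_left (measure_ne_top_of_subset sdiff_subset hMfin) (hSvol ▸ hτU)
      _ = volume M := by
        rw [← measure_sdiff_add_inter M hU, inter_eq_right.2 hUM]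
  exact (hmin _ ((hMm.diff hU).union hS) hmass).not_gt hvol

theorem exists_isMinVolSet_mem_nhds (hp : Continuous p) (hnn : ∀ x, 0 ≤ p x)
    (h1 : ∫ x, p x = 1) (hbdd : BddAbove (range p)) (hnull : volume {x | p x = ⨆ y, p y} = 0)
    {x₀ : Fin m → ℝ} (hx₀ : p x₀ = ⨆ y, p y) {c : ℝ} (hc : 0 < c) :
    ∃ α M, IsMinVolSet m p α M ∧ α ∈ Ioc 0 1 ∧ α ≤ c ∧ M ∈ 𝓝 x₀ := by
  have hi : Integrable p := integrable_of_integral_eq_one h1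
  set S := ⨆ y, p y
  have hS : 0 < S := ciSup_pos_of_integral_pos hbdd (h1 ▸ one_pos)
  obtain ⟨t, ht, htS, htvol⟩ := exists_superlevel_measure_lt hp.measurable hi hbdd hnull hS
    (ENNReal.ofReal_pos.2 (div_pos hc hS))
  have hnhds : {x | t ≤ p x} ∈ 𝓝 x₀ :=
    (hp.continuousAt.eventually (lt_mem_nhds (hx₀ ▸ htS))).mono fun _ => le_of_lt
  refine ⟨_, _, isMinVolSet_superlevel hp.measurable hi ht,
    ⟨integral_superlevel_pos hp.measurable hi ht hnhds,
      h1 ▸ setIntegral_le_integral hi (Eventually.of_forall hnn)⟩, ?_, hnhds⟩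
  calc ∫ x in {x | t ≤ p x}, p x ≤ S * volume.real {x | t ≤ p x} := by
        simpa [mul_comm] using setIntegral_mono_on hi.integrableOn
          (integrableOn_const (hi.measure_ge_lt_top ht).ne)
          (measurableSet_le measurable_const hp.measurable) fun x _ => le_ciSup hbdd x
    _ ≤ S * (c / S) := by
        gcongr
        exact (ENNReal.toReal_lt_of_lt_ofReal htvol).le
    _ = c := mul_div_cancel₀ c hS.ne'

theorem exists_forall_isMinVolSet_volume_lt (hp : Continuous p) (h1 : ∫ x, p x = 1)
    (hbdd : BddAbove (range p)) (hnull : volume {x | p x = ⨆ y, p y} = 0)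
    {η : ℝ≥0∞} (hη : 0 < η) :
    ∃ c > 0, ∀ α M, α ≤ c → IsMinVolSet m p α M → volume M < η := by
  have hi : Integrable p := integrable_of_integral_eq_one h1
  have hS := ciSup_pos_of_integral_pos hbdd (h1 ▸ one_pos)
  obtain ⟨t, ht, htS, htvol⟩ := exists_superlevel_measure_lt hp.measurable hi hbdd hnull hS hη
  obtain ⟨y, hy⟩ := exists_lt_of_lt_ciSup htS
  have hnhds : {x | t ≤ p x} ∈ 𝓝 y :=
    (hp.continuousAt.eventually (lt_mem_nhds hy)).mono fun _ => le_of_lt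
  exact ⟨_, integral_superlevel_pos hp.measurable hi ht hnhds, fun α M hα hM =>
    (hM.2.2 _ (measurableSet_le measurable_const hp.measurable) hα).trans_lt htvol⟩

theorem exists_forall_isMinVolSet_le_volume [NeZero m] (hp : Continuous p) (hnn : ∀ x, 0 ≤ p x)
    (hi : Integrable p) {x₀ : Fin m → ℝ} (hx₀ : p x₀ < ⨆ y, p y) :
    ∃ η > 0, ∀ α M, IsMinVolSet m p α M → M ∈ 𝓝 x₀ → η ≤ volume M := by
  obtain ⟨a, hx₀a, haS⟩ := exists_between hx₀
  obtain ⟨b, hab, hbS⟩ := exists_between haS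
  have hWopen : IsOpen {x | b < p x} := isOpen_lt continuous_const hp
  obtain ⟨y, hy⟩ := exists_lt_of_lt_ciSup hbS
  refine ⟨volume {x | b < p x} / 2, ENNReal.half_pos (hWopen.measure_ne_zero volume ⟨y, hy⟩),
    fun α M hM hMx => ?_⟩
  rcases eq_or_ne (volume M) ∞ with hMtop | hMfin
  · simp [hMtop]
  have hUopen : IsOpen (interior M ∩ {x | p x < a}) :=
    isOpen_interior.inter (isOpen_lt hp continuous_const)
  have hUnhds : interior M ∩ {x | p x < a} ∈ 𝓝 x₀ :=
    inter_mem (interior_mem_nhds.2 hMx) ((isOpen_lt hp continuous_const).mem_nhds hx₀a)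
  have hswap := hM.volume_lt_of_density_lt hMfin hi hUopen.measurableSet
    (inter_subset_left.trans interior_subset) (volume.measure_pos_of_mem_nhds hUnhds).ne'
    (fun x hx => hx.2.le) (hWopen.measurableSet.diff hM.1) disjoint_sdiff_left
    (fun x hx => hx.1.le) ((hnn x₀).trans_lt hx₀a) hab
  rw [ENNReal.div_le_iff two_ne_zero ENNReal.ofNat_ne_top]
  calc volume {x | b < p x} ≤ volume ({x | b < p x} ∩ M) + volume ({x | b < p x} \ M) :=
        measure_le_inter_add_sdiff _ _ _
    _ ≤ volume M + volume M := add_le_add (measure_mono inter_subset_right)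
        (hswap.le.trans (measure_mono (inter_subset_left.trans interior_subset)))
    _ = volume M * 2 := by rw [mul_two]

end MinVolSet

theorem strictly_conservative_modes_subset_general
    (m : ℕ) (pt pc : (Fin m → ℝ) → ℝ)
    (hpt_cont : Continuous pt) (hpc_cont : Continuous pc)
    (hpt_nonneg : ∀ x, 0 ≤ pt x) (hpc_nonneg : ∀ x, 0 ≤ pc x)
    (hpt_int : ∫ x, pt x = 1) (hpc_int : ∫ x, pc x = 1)
    (hpt_bdd : BddAbove (Set.range pt)) (hpc_bdd : BddAbove (Set.range pc))
    (hModt_fin : {x | pt x = ⨆ y, pt y}.Finite)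
    (hModc_fin : {x | pc x = ⨆ y, pc y}.Finite)
    (hSC : ∀ α ∈ Set.Ioc (0:ℝ) 1, ∀ Mt : Set (Fin m → ℝ), IsMinVolSet m pt α Mt →
      ∃ Mc : Set (Fin m → ℝ), IsMinVolSet m pc α Mc ∧ Mt ⊆ Mc) :
    {x | pt x = ⨆ y, pt y} ⊆ {x | pc x = ⨆ y, pc y} := by
  rcases eq_or_ne m 0 with rfl | hm
  · intro x _
    rw [mem_ofPred_eq, ciSup_unique]
    exact congrArg pc (Subsingleton.elim _ _)
  have : NeZero m := ⟨hm⟩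
  intro x₀ hx₀
  by_contra hne
  obtain ⟨η, hη, hlarge⟩ := exists_forall_isMinVolSet_le_volume hpc_cont hpc_nonneg
    (integrable_of_integral_eq_one hpc_int) ((le_ciSup hpc_bdd x₀).lt_of_ne hne)
  obtain ⟨c, hc, hsmall⟩ := exists_forall_isMinVolSet_volume_lt hpc_cont hpc_int hpc_bdd
    (hModc_fin.measure_zero volume) hη
  obtain ⟨α, Mt, hMt, hα, hαc, hMtx₀⟩ := exists_isMinVolSet_mem_nhds hpt_cont hpt_nonneg hpt_int
    hpt_bdd (hModt_fin.measure_zero volume) hx₀ hc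
  obtain ⟨Mc, hMc, hMtMc⟩ := hSC α hα Mt hMt
  exact (hsmall α Mc hαc hMc).not_ge (hlarge α Mc hMc (mem_of_superset hMtx₀ hMtMc))

/-- If `p_c` is strictly conservative w.r.t. `p_t` (every minimum volume set of `p_t`
is contained in some minimum volume set of `p_c`, for every area `α`), then every
maximum likelihood mode of `p_t` is a maximum likelihood mode of `p_c`. -/
theorem strictly_conservative_modes_subset
    (m : ℕ) (pt pc : (Fin m → ℝ) → ℝ)
    (hpt_cont : Continuous pt) (hpc_cont : Continuous pc)
    (hpt_nonneg : ∀ x, 0 ≤ pt x) (hpc_nonneg : ∀ x, 0 ≤ pc x)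
    (hpt_int : ∫ x, pt x = 1) (hpc_int : ∫ x, pc x = 1)
    (hpt_bdd : BddAbove (Set.range pt)) (hpc_bdd : BddAbove (Set.range pc))
    (hModt_fin : {x | pt x = ⨆ y, pt y}.Finite)
    (hModt_ne : {x | pt x = ⨆ y, pt y}.Nonempty)
    (hModc_fin : {x | pc x = ⨆ y, pc y}.Finite)
    (hModc_ne : {x | pc x = ⨆ y, pc y}.Nonempty)
    (hSC : ∀ α ∈ Set.Ioc (0:ℝ) 1, ∀ Mt : Set (Fin m → ℝ), IsMinVolSet m pt α Mt →
      ∃ Mc : Set (Fin m → ℝ), IsMinVolSet m pc α Mc ∧ Mt ⊆ Mc) :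
    {x | pt x = ⨆ y, pt y} ⊆ {x | pc x = ⨆ y, pc y} :=
  strictly_conservative_modes_subset_general m pt pc hpt_cont hpc_cont hpt_nonneg hpc_nonneg hpt_int
    hpc_int hpt_bdd hpc_bdd hModt_fin hModc_fin hSC
end
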